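/- arXiv:2502.04723 — 8 statements merged into one kernel-verified Lean document; each statement's English description precedes it below -/
import Mathlib

section
/- If σe² > 0 (so that λ0, λ1, λ2, λ3, λ4 are all positive), then V is invertible and its inverse is V^{-1} = λ0^{-1}·E0 + λ1^{-1}·E1 + λ2^{-1}·E2 + λ3^{-1}·E3 + λ4^{-1}·E4; equivalently, V · (λ0^{-1}E0 + λ1^{-1}E1 + λ2^{-1}E2 + λ3^{-1}E3 + λ4^{-1}E4) = I_n. -/
open Matrix Kronecker

/-- The `a × a` all-ones matrix `J_a`. -/
noncomputable def Jmat (a : ℕ) : Matrix (Fin a) (Fin a) ℝ := Matrix.of fun _ _ => 1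

/-- `J̄_a = a⁻¹ J_a`. -/
noncomputable def Jbar (a : ℕ) : Matrix (Fin a) (Fin a) ℝ := ((a : ℝ)⁻¹) • Jmat a

/-- `C_a = I_a − J̄_a`. -/
noncomputable def Cmat (a : ℕ) : Matrix (Fin a) (Fin a) ℝ := 1 - Jbar a

/-- The five matrices `E0,…,E4`, as a family indexed by `Fin 5`. -/
noncomputable def Emat (g h m : ℕ) : Fin 5 →
    Matrix ((Fin g × Fin h) × Fin m) ((Fin g × Fin h) × Fin m) ℝ
  | 0 => (1 : Matrix (Fin g) (Fin g) ℝ) ⊗ₖ (1 : Matrix (Fin h) (Fin h) ℝ) ⊗ₖ Cmat m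
  | 1 => Cmat g ⊗ₖ Cmat h ⊗ₖ Jbar m
  | 2 => Cmat g ⊗ₖ Jbar h ⊗ₖ Jbar m
  | 3 => Jbar g ⊗ₖ Cmat h ⊗ₖ Jbar m
  | 4 => Jbar g ⊗ₖ Jbar h ⊗ₖ Jbar m

/-- The covariance matrix `V = σα²(I_g⊗J_h⊗J_m) + σβ²(J_g⊗I_h⊗J_m) + σγ²(I_g⊗I_h⊗J_m)
+ σe² I_n` of the balanced two-way crossed random effect model with interaction. -/
noncomputable def Vmat (g h m : ℕ) (σα2 σβ2 σγ2 σe2 : ℝ) :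
    Matrix ((Fin g × Fin h) × Fin m) ((Fin g × Fin h) × Fin m) ℝ :=
  σα2 • ((1 : Matrix (Fin g) (Fin g) ℝ) ⊗ₖ Jmat h ⊗ₖ Jmat m) +
  σβ2 • (Jmat g ⊗ₖ (1 : Matrix (Fin h) (Fin h) ℝ) ⊗ₖ Jmat m) +
  σγ2 • ((1 : Matrix (Fin g) (Fin g) ℝ) ⊗ₖ (1 : Matrix (Fin h) (Fin h) ℝ) ⊗ₖ Jmat m) +
  σe2 • (1 : Matrix ((Fin g × Fin h) × Fin m) ((Fin g × Fin h) × Fin m) ℝ)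

/-! ### Auxiliary lemmas -/

lemma Jmat_mul_Jmat (a : ℕ) : Jmat a * Jmat a = (a : ℝ) • Jmat a := by
  ext i j
  simp [Jmat, Matrix.mul_apply]

lemma Jbar_mul_Jbar {a : ℕ} (ha : 0 < a) : Jbar a * Jbar a = Jbar a := by
  have h0 : (a : ℝ) ≠ 0 := Nat.cast_ne_zero.mpr ha.ne'
  rw [Jbar, Matrix.smul_mul, Matrix.mul_smul, Jmat_mul_Jmat, smul_smul, smul_smul,
    mul_assoc, inv_mul_cancel₀ h0, mul_one]

lemma Cmat_mul_Jbar {a : ℕ} (ha : 0 < a) : Cmat a * Jbar a = 0 := by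
  rw [Cmat, Matrix.sub_mul, Matrix.one_mul, Jbar_mul_Jbar ha, sub_self]

lemma Jbar_mul_Cmat {a : ℕ} (ha : 0 < a) : Jbar a * Cmat a = 0 := by
  rw [Cmat, Matrix.mul_sub, Matrix.mul_one, Jbar_mul_Jbar ha, sub_self]

lemma Cmat_mul_Cmat {a : ℕ} (ha : 0 < a) : Cmat a * Cmat a = Cmat a := by
  rw [Cmat, Matrix.mul_sub, Matrix.mul_one, Matrix.sub_mul, Matrix.one_mul,
    Jbar_mul_Jbar ha, sub_self, sub_zero]

lemma Jmat_eq_smul_Jbar {a : ℕ} (ha : 0 < a) : Jmat a = (a : ℝ) • Jbar a := by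
  have h0 : (a : ℝ) ≠ 0 := Nat.cast_ne_zero.mpr ha.ne'
  rw [Jbar, smul_smul, mul_inv_cancel₀ h0, one_smul]

lemma one_eq_Cmat_add_Jbar (a : ℕ) :
    (1 : Matrix (Fin a) (Fin a) ℝ) = Cmat a + Jbar a := by
  rw [Cmat, sub_add_cancel]

lemma kronecker_sub' {l m n p : Type*} (A : Matrix l m ℝ) (B₁ B₂ : Matrix n p ℝ) :
    A ⊗ₖ (B₁ - B₂) = A ⊗ₖ B₁ - A ⊗ₖ B₂ := by
  ext ⟨i, j⟩ ⟨k, l⟩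
  simp [Matrix.kroneckerMap_apply, mul_sub]

lemma sub_kronecker' {l m n p : Type*} (A₁ A₂ : Matrix l m ℝ) (B : Matrix n p ℝ) :
    (A₁ - A₂) ⊗ₖ B = A₁ ⊗ₖ B - A₂ ⊗ₖ B := by
  ext ⟨i, j⟩ ⟨k, l⟩
  simp [Matrix.kroneckerMap_apply, sub_mul]

/-- Abstract lemma: an orthogonal family of idempotents summing to 1. -/
lemma ortho_sum_inv {n : Type*} [Fintype n] [DecidableEq n]
    (e : Fin 5 → Matrix n n ℝ)
    (horth : ∀ i j, e i * e j = if i = j then e i else 0)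
    (hsum : ∑ i, e i = 1) (lam : Fin 5 → ℝ) (hlam : ∀ i, lam i ≠ 0) :
    (∑ i, lam i • e i) * (∑ i, (lam i)⁻¹ • e i) = 1 := by
  rw [Finset.sum_mul_sum, ← hsum]
  refine Finset.sum_congr rfl fun i _ => ?_
  have key : ∀ j, (lam i • e i) * ((lam j)⁻¹ • e j)
      = if i = j then (lam i * (lam j)⁻¹) • e i else 0 := by
    intro j
    rw [smul_mul_assoc, mul_smul_comm, smul_smul, horth]
    split <;> simp
  simp only [key]
  rw [Finset.sum_ite_eq]
  simp [mul_inv_cancel₀ (hlam i)]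

/-- If `σe² > 0` (so all the eigenvalues `λ0,…,λ4` are positive), then `V` is invertible
with inverse `V⁻¹ = λ0⁻¹E0 + λ1⁻¹E1 + λ2⁻¹E2 + λ3⁻¹E3 + λ4⁻¹E4`; equivalently,
`V · (λ0⁻¹E0 + λ1⁻¹E1 + λ2⁻¹E2 + λ3⁻¹E3 + λ4⁻¹E4) = I_n`. -/
theorem Vmat_inverse (g h m : ℕ) (hg : 0 < g) (hh : 0 < h) (hm : 0 < m)
    (σα2 σβ2 σγ2 σe2 : ℝ) (hα : 0 ≤ σα2) (hβ : 0 ≤ σβ2) (hγ : 0 ≤ σγ2) (he : 0 < σe2) :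
    IsUnit (Vmat g h m σα2 σβ2 σγ2 σe2) ∧
    (Vmat g h m σα2 σβ2 σγ2 σe2)⁻¹ =
      (σe2)⁻¹ • Emat g h m 0 +
      (σe2 + m * σγ2)⁻¹ • Emat g h m 1 +
      (σe2 + m * σγ2 + h * m * σα2)⁻¹ • Emat g h m 2 +
      (σe2 + m * σγ2 + g * m * σβ2)⁻¹ • Emat g h m 3 +
      (σe2 + m * σγ2 + h * m * σα2 + g * m * σβ2)⁻¹ • Emat g h m 4 ∧
    Vmat g h m σα2 σβ2 σγ2 σe2 *
      ((σe2)⁻¹ • Emat g h m 0 +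
       (σe2 + m * σγ2)⁻¹ • Emat g h m 1 +
       (σe2 + m * σγ2 + h * m * σα2)⁻¹ • Emat g h m 2 +
       (σe2 + m * σγ2 + g * m * σβ2)⁻¹ • Emat g h m 3 +
       (σe2 + m * σγ2 + h * m * σα2 + g * m * σβ2)⁻¹ • Emat g h m 4) = 1 := by
  set lam : Fin 5 → ℝ := ![σe2, σe2 + m * σγ2, σe2 + m * σγ2 + h * m * σα2,
    σe2 + m * σγ2 + g * m * σβ2, σe2 + m * σγ2 + h * m * σα2 + g * m * σβ2] with hlamdef
  have hlam : ∀ i, lam i ≠ 0 := by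
    intro i
    fin_cases i <;> simp [hlamdef] <;> positivity
  have horth : ∀ i j, Emat g h m i * Emat g h m j = if i = j then Emat g h m i else 0 := by
    intro i j
    fin_cases i <;> fin_cases j <;>
      simp [Emat, ← Matrix.mul_kronecker_mul, Cmat_mul_Cmat hg, Cmat_mul_Cmat hh,
        Cmat_mul_Cmat hm, Cmat_mul_Jbar hg, Cmat_mul_Jbar hh, Cmat_mul_Jbar hm,
        Jbar_mul_Cmat hg, Jbar_mul_Cmat hh, Jbar_mul_Cmat hm,
        Jbar_mul_Jbar hg, Jbar_mul_Jbar hh, Jbar_mul_Jbar hm]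
  have hsum : ∑ i, Emat g h m i = 1 := by
    rw [Fin.sum_univ_five]
    simp only [Emat]
    rw [show (1 : Matrix ((Fin g × Fin h) × Fin m) ((Fin g × Fin h) × Fin m) ℝ)
        = ((1 : Matrix (Fin g) (Fin g) ℝ) ⊗ₖ (1 : Matrix (Fin h) (Fin h) ℝ))
          ⊗ₖ (1 : Matrix (Fin m) (Fin m) ℝ) by
      rw [Matrix.one_kronecker_one, Matrix.one_kronecker_one]]
    simp only [Cmat, kronecker_sub', sub_kronecker', Matrix.kronecker_add,
      Matrix.add_kronecker]
    abel
  have hV : Vmat g h m σα2 σβ2 σγ2 σe2 = ∑ i, lam i • Emat g h m i := by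
    rw [Fin.sum_univ_five]
    simp only [Emat, hlamdef, Matrix.cons_val_zero, Matrix.cons_val_one, Matrix.head_cons,
      Matrix.cons_val_two, Matrix.tail_cons, Matrix.cons_val_three, Matrix.cons_val_four]
    rw [Vmat, Jmat_eq_smul_Jbar hg, Jmat_eq_smul_Jbar hh, Jmat_eq_smul_Jbar hm,
      show (1 : Matrix ((Fin g × Fin h) × Fin m) ((Fin g × Fin h) × Fin m) ℝ)
        = ((1 : Matrix (Fin g) (Fin g) ℝ) ⊗ₖ (1 : Matrix (Fin h) (Fin h) ℝ))
          ⊗ₖ (1 : Matrix (Fin m) (Fin m) ℝ) by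
        rw [Matrix.one_kronecker_one, Matrix.one_kronecker_one],
      one_eq_Cmat_add_Jbar g, one_eq_Cmat_add_Jbar h, one_eq_Cmat_add_Jbar m]
    simp only [Cmat, kronecker_sub', sub_kronecker', Matrix.kronecker_add,
      Matrix.add_kronecker, Matrix.smul_kronecker, Matrix.kronecker_smul]
    module
  have hWsum : ((σe2)⁻¹ • Emat g h m 0 +
       (σe2 + m * σγ2)⁻¹ • Emat g h m 1 +
       (σe2 + m * σγ2 + h * m * σα2)⁻¹ • Emat g h m 2 +
       (σe2 + m * σγ2 + g * m * σβ2)⁻¹ • Emat g h m 3 +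
       (σe2 + m * σγ2 + h * m * σα2 + g * m * σβ2)⁻¹ • Emat g h m 4)
      = ∑ i, (lam i)⁻¹ • Emat g h m i := by
    rw [Fin.sum_univ_five]
    simp [hlamdef]
  have h1 : Vmat g h m σα2 σβ2 σγ2 σe2 *
      ((σe2)⁻¹ • Emat g h m 0 +
       (σe2 + m * σγ2)⁻¹ • Emat g h m 1 +
       (σe2 + m * σγ2 + h * m * σα2)⁻¹ • Emat g h m 2 +
       (σe2 + m * σγ2 + g * m * σβ2)⁻¹ • Emat g h m 3 +
       (σe2 + m * σγ2 + h * m * σα2 + g * m * σβ2)⁻¹ • Emat g h m 4) = 1 := by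
    rw [hWsum, hV]
    exact ortho_sum_inv _ horth hsum lam hlam
  refine ⟨(Matrix.isUnit_iff_isUnit_det _).mpr (Matrix.isUnit_det_of_right_inverse h1),
    Matrix.inv_eq_right_inv h1, h1⟩
end

section
/- For every vector r ∈ ℝ^n and every row index i with 1 ≤ i ≤ g, the i-th entry of the g-vector σα²·Z1^T·V^{-1}·r equals (hmσα²/λ2)·r̄_{i·} − hmσα²·(1/λ2 − 1/λ4)·r̄, where V^{-1} = λ0^{-1}E0 + λ1^{-1}E1 + λ2^{-1}E2 + λ3^{-1}E3 + λ4^{-1}E4. (This is the explicit form of the BLUP of the i-th row random effect applied to the residual vector r.) -/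
open Matrix Kronecker BigOperators

/-- The explicit inverse `V⁻¹ = λ0⁻¹E0 + λ1⁻¹E1 + λ2⁻¹E2 + λ3⁻¹E3 + λ4⁻¹E4` of the
covariance matrix, where `λ0 = σe²`, `λ1 = σe² + mσγ²`, `λ2 = σe² + mσγ² + hmσα²`,
`λ3 = σe² + mσγ² + gmσβ²`, `λ4 = σe² + mσγ² + hmσα² + gmσβ²`. -/
noncomputable def Vinv (g h m : ℕ) (σα2 σβ2 σγ2 σe2 : ℝ) :
    Matrix ((Fin g × Fin h) × Fin m) ((Fin g × Fin h) × Fin m) ℝ :=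
  (σe2)⁻¹ • Emat g h m 0 +
  (σe2 + m * σγ2)⁻¹ • Emat g h m 1 +
  (σe2 + m * σγ2 + h * m * σα2)⁻¹ • Emat g h m 2 +
  (σe2 + m * σγ2 + g * m * σβ2)⁻¹ • Emat g h m 3 +
  (σe2 + m * σγ2 + h * m * σα2 + g * m * σβ2)⁻¹ • Emat g h m 4

/-- The design matrix `Z1 = I_g ⊗ 1_h ⊗ 1_m` of the row random effects. -/
noncomputable def Z1 (g h m : ℕ) : Matrix ((Fin g × Fin h) × Fin m) (Fin g) ℝ :=
  Matrix.of fun p i => if p.1.1 = i then 1 else 0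

/-- The row average `r̄_{i·} = (hm)⁻¹ Σ_{j,k} r_{ijk}` of a vector `r ∈ ℝⁿ`. -/
noncomputable def rowAvg (g h m : ℕ) (r : (Fin g × Fin h) × Fin m → ℝ) (i : Fin g) : ℝ :=
  ((h : ℝ) * m)⁻¹ * ∑ j : Fin h, ∑ k : Fin m, r ((i, j), k)

/-- The grand average `r̄ = n⁻¹ Σ_{i,j,k} r_{ijk}` of a vector `r ∈ ℝⁿ`. -/
noncomputable def grandAvg (g h m : ℕ) (r : (Fin g × Fin h) × Fin m → ℝ) : ℝ :=
  ((g : ℝ) * h * m)⁻¹ * ∑ i : Fin g, ∑ j : Fin h, ∑ k : Fin m, r ((i, j), k)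

lemma sum_swap_mulVec {g h m : ℕ} (M : Matrix ((Fin g × Fin h) × Fin m) ((Fin g × Fin h) × Fin m) ℝ)
    (r : (Fin g × Fin h) × Fin m → ℝ) (i : Fin g) :
    ∑ j : Fin h, ∑ k : Fin m, (M *ᵥ r) ((i,j),k)
    = ∑ p : (Fin g × Fin h) × Fin m, (∑ j : Fin h, ∑ k : Fin m, M ((i,j),k) p) * r p := by
  simp only [mulVec, dotProduct, Finset.sum_mul]
  calc ∑ j : Fin h, ∑ k : Fin m, ∑ p, M ((i,j),k) p * r p
      = ∑ j : Fin h, ∑ p, ∑ k : Fin m, M ((i,j),k) p * r p :=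
        Finset.sum_congr rfl fun j _ => Finset.sum_comm
    _ = ∑ p, ∑ j : Fin h, ∑ k : Fin m, M ((i,j),k) p * r p := Finset.sum_comm

lemma sum_Cmat {a : ℕ} (ha : 0 < a) (j' : Fin a) : ∑ j : Fin a, Cmat a j j' = 0 := by
  simp [Cmat, Jbar, Jmat, one_apply, Matrix.sub_apply, Finset.sum_sub_distrib, Finset.sum_ite_eq,
    mul_comm, mul_inv_cancel₀ (by exact_mod_cast ha.ne' : (a:ℝ) ≠ 0)]

lemma sum_Jbar {a : ℕ} (ha : 0 < a) (j' : Fin a) : ∑ j : Fin a, Jbar a j j' = 1 := by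
  simp [Jbar, Jmat, Finset.sum_const, mul_inv_cancel₀ (by exact_mod_cast ha.ne' : (a:ℝ) ≠ 0)]

lemma key {g h m : ℕ} (A : Matrix (Fin g) (Fin g) ℝ) (B : Matrix (Fin h) (Fin h) ℝ)
    (C : Matrix (Fin m) (Fin m) ℝ) (r : (Fin g × Fin h) × Fin m → ℝ) (i : Fin g) :
    ∑ j : Fin h, ∑ k : Fin m, ((A ⊗ₖ B ⊗ₖ C) *ᵥ r) ((i,j),k)
    = ∑ p : (Fin g × Fin h) × Fin m,
        (A i p.1.1 * (∑ j : Fin h, B j p.1.2) * (∑ k : Fin m, C k p.2)) * r p := by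
  rw [sum_swap_mulVec]
  refine Finset.sum_congr rfl fun p _ => ?_
  congr 1
  simp only [kroneckerMap_apply]
  simp only [Finset.mul_sum, Finset.sum_mul, mul_assoc]
  exact Finset.sum_comm


/-- Explicit form of the BLUP of the `i`-th row random effect applied to a residual
vector `r`: the `i`-th entry of `σα² Z1ᵀ V⁻¹ r` equals
`(hmσα²/λ2) r̄_{i·} − hmσα² (1/λ2 − 1/λ4) r̄`. -/
theorem rowBLUP_explicit (g h m : ℕ) (hg : 0 < g) (hh : 0 < h) (hm : 0 < m)
    (σα2 σβ2 σγ2 σe2 : ℝ) (hα : 0 ≤ σα2) (hβ : 0 ≤ σβ2) (hγ : 0 ≤ σγ2) (he : 0 < σe2)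
    (r : (Fin g × Fin h) × Fin m → ℝ) (i : Fin g) :
    (σα2 • ((Z1 g h m)ᵀ *ᵥ (Vinv g h m σα2 σβ2 σγ2 σe2 *ᵥ r))) i =
      (h * m * σα2 / (σe2 + m * σγ2 + h * m * σα2)) * rowAvg g h m r i -
      h * m * σα2 * ((σe2 + m * σγ2 + h * m * σα2)⁻¹ -
        (σe2 + m * σγ2 + h * m * σα2 + g * m * σβ2)⁻¹) * grandAvg g h m r := by
  have hgR : (g:ℝ) ≠ 0 := by exact_mod_cast hg.ne'
  have hhR : (h:ℝ) ≠ 0 := by exact_mod_cast hh.ne'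
  have hmR : (m:ℝ) ≠ 0 := by exact_mod_cast hm.ne'
  have hmn : (0:ℝ) ≤ (m:ℝ) * σγ2 := mul_nonneg (Nat.cast_nonneg m) hγ
  have hL2 : σe2 + m * σγ2 + h * m * σα2 ≠ 0 := by positivity
  have hL4 : σe2 + m * σγ2 + h * m * σα2 + g * m * σβ2 ≠ 0 := by positivity
  set S : ℝ := ∑ j : Fin h, ∑ k : Fin m, r ((i, j), k) with hS
  set T : ℝ := ∑ p : (Fin g × Fin h) × Fin m, r p with hT
  -- sums over each Emat
  have e0 : ∑ j : Fin h, ∑ k : Fin m, (Emat g h m 0 *ᵥ r) ((i,j),k) = 0 := by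
    rw [show Emat g h m 0 = (1 : Matrix (Fin g) (Fin g) ℝ) ⊗ₖ (1 : Matrix (Fin h) (Fin h) ℝ) ⊗ₖ Cmat m from rfl, key]
    simp [sum_Cmat hm]
  have e1 : ∑ j : Fin h, ∑ k : Fin m, (Emat g h m 1 *ᵥ r) ((i,j),k) = 0 := by
    rw [show Emat g h m 1 = Cmat g ⊗ₖ Cmat h ⊗ₖ Jbar m from rfl, key]
    simp [sum_Cmat hh]
  have e3 : ∑ j : Fin h, ∑ k : Fin m, (Emat g h m 3 *ᵥ r) ((i,j),k) = 0 := by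
    rw [show Emat g h m 3 = Jbar g ⊗ₖ Cmat h ⊗ₖ Jbar m from rfl, key]
    simp [sum_Cmat hh]
  have e2 : ∑ j : Fin h, ∑ k : Fin m, (Emat g h m 2 *ᵥ r) ((i,j),k) = S - (g:ℝ)⁻¹ * T := by
    rw [show Emat g h m 2 = Cmat g ⊗ₖ Jbar h ⊗ₖ Jbar m from rfl, key]
    simp only [sum_Jbar hh, sum_Jbar hm, mul_one]
    have : ∀ p : (Fin g × Fin h) × Fin m,
        Cmat g i p.1.1 * r p = (if i = p.1.1 then 1 else 0) * r p - (g:ℝ)⁻¹ * r p := by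
      intro p
      simp [Cmat, Jbar, Jmat, one_apply, sub_mul]
    simp only [this, Finset.sum_sub_distrib, ← Finset.mul_sum, ← hT]
    congr 1
    rw [hS, Fintype.sum_prod_type, Fintype.sum_prod_type]
    simp
  have e4 : ∑ j : Fin h, ∑ k : Fin m, (Emat g h m 4 *ᵥ r) ((i,j),k) = (g:ℝ)⁻¹ * T := by
    rw [show Emat g h m 4 = Jbar g ⊗ₖ Jbar h ⊗ₖ Jbar m from rfl, key]
    simp only [sum_Jbar hg, sum_Jbar hh, sum_Jbar hm, mul_one]
    simp [Jbar, Jmat, ← Finset.mul_sum, ← hT]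
  -- reduce LHS to row sums of Vinv *ᵥ r
  have step1 : ∀ w : (Fin g × Fin h) × Fin m → ℝ,
      ((Z1 g h m)ᵀ *ᵥ w) i = ∑ j : Fin h, ∑ k : Fin m, w ((i,j),k) := by
    intro w
    simp only [Z1, mulVec, dotProduct, transpose_apply, of_apply, Fintype.sum_prod_type,
      ite_mul, one_mul, zero_mul]
    rw [Finset.sum_eq_single i (fun b _ hb => by simp [hb]) (fun hi => absurd (Finset.mem_univ i) hi)]
    simp
  have hrow : ∑ j : Fin h, ∑ k : Fin m, (Vinv g h m σα2 σβ2 σγ2 σe2 *ᵥ r) ((i,j),k)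
      = (σe2 + m * σγ2 + h * m * σα2)⁻¹ * (S - (g:ℝ)⁻¹ * T)
        + (σe2 + m * σγ2 + h * m * σα2 + g * m * σβ2)⁻¹ * ((g:ℝ)⁻¹ * T) := by
    simp only [Vinv, add_mulVec, smul_mulVec, Pi.add_apply, Pi.smul_apply,
      smul_eq_mul, Finset.sum_add_distrib, ← Finset.mul_sum]
    rw [e0, e1, e2, e3, e4]
    ring
  have hgrand : ∑ i' : Fin g, ∑ j : Fin h, ∑ k : Fin m, r ((i', j), k) = T := by
    rw [hT, Fintype.sum_prod_type, Fintype.sum_prod_type]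
  rw [Pi.smul_apply, step1, hrow, rowAvg, grandAvg, hgrand, ← hS, smul_eq_mul]
  field_simp
  ring
end

section
/- For every vector r ∈ ℝ^n and every column index j with 1 ≤ j ≤ h, the j-th entry of the h-vector σβ²·Z2^T·V^{-1}·r equals (gmσβ²/λ3)·r̄_{·j} − gmσβ²·(1/λ3 − 1/λ4)·r̄, where V^{-1} = λ0^{-1}E0 + λ1^{-1}E1 + λ2^{-1}E2 + λ3^{-1}E3 + λ4^{-1}E4. (This is the explicit form of the BLUP of the j-th column random effect applied to the residual vector r.) -/
open Matrix Kronecker BigOperators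

/-- The design matrix `Z2 = 1_g ⊗ I_h ⊗ 1_m` of the column random effects. -/
noncomputable def Z2 (g h m : ℕ) : Matrix ((Fin g × Fin h) × Fin m) (Fin h) ℝ :=
  Matrix.of fun p j => if p.1.2 = j then 1 else 0

/-- The column average `r̄_{·j} = (gm)⁻¹ Σ_{i,k} r_{ijk}` of a vector `r ∈ ℝⁿ`. -/
noncomputable def colAvg (g h m : ℕ) (r : (Fin g × Fin h) × Fin m → ℝ) (j : Fin h) : ℝ :=
  ((g : ℝ) * m)⁻¹ * ∑ i : Fin g, ∑ k : Fin m, r ((i, j), k)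

/-- Pull an `x`-independent `if` out of a sum. -/
lemma sum_ite_irrel {α : Type*} [Fintype α] (c : Prop) [Decidable c] (f : α → ℝ) :
    ∑ x : α, (if c then f x else 0) = if c then ∑ x : α, f x else 0 := by
  split <;> simp

/-- Reverse the order of a triple sum. -/
lemma sum_comm3 {α β γ : Type*} [Fintype α] [Fintype β] [Fintype γ] (f : α → β → γ → ℝ) :
    ∑ c : γ, ∑ b : β, ∑ a : α, f a b c = ∑ a : α, ∑ b : β, ∑ c : γ, f a b c :=
  calc ∑ c : γ, ∑ b : β, ∑ a : α, f a b c
      = ∑ b : β, ∑ c : γ, ∑ a : α, f a b c := Finset.sum_comm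
    _ = ∑ b : β, ∑ a : α, ∑ c : γ, f a b c :=
        Finset.sum_congr rfl fun _ _ => Finset.sum_comm
    _ = ∑ a : α, ∑ b : β, ∑ c : γ, f a b c := Finset.sum_comm

lemma Z2t_mulVec {g h m : ℕ} (v : (Fin g × Fin h) × Fin m → ℝ) (j : Fin h) :
    ((Z2 g h m)ᵀ *ᵥ v) j = ∑ i : Fin g, ∑ k : Fin m, v ((i, j), k) := by
  simp only [Matrix.mulVec, dotProduct, Matrix.transpose_apply, Z2, Matrix.of_apply,
    Fintype.sum_prod_type, ite_mul, one_mul, zero_mul]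
  refine Finset.sum_congr rfl fun i _ => ?_
  rw [Finset.sum_comm]
  simp [Finset.sum_ite_eq, Finset.sum_ite_eq']

section Esums
variable {g h m : ℕ}

lemma sumE0 (hm : 0 < m) (r : (Fin g × Fin h) × Fin m → ℝ) (j : Fin h) :
    ∑ i : Fin g, ∑ k : Fin m, (Emat g h m 0 *ᵥ r) ((i, j), k) = 0 := by
  have hm' : (m:ℝ) ≠ 0 := Nat.cast_ne_zero.2 hm.ne'
  simp only [Emat, Matrix.mulVec, dotProduct, Fintype.sum_prod_type_right,
    Matrix.kroneckerMap_apply]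
  simp only [Cmat, Jbar, Jmat, Matrix.sub_apply, Matrix.smul_apply, Matrix.one_apply,
    Matrix.of_apply, smul_eq_mul, mul_one,
    ite_mul, one_mul, zero_mul, mul_ite, mul_zero, sub_mul, mul_sub,
    Finset.sum_sub_distrib, Finset.sum_const_zero, sum_ite_irrel,
    Finset.sum_ite_eq, Finset.sum_ite_eq', Finset.mem_univ, if_true]
  rw [sub_eq_zero]
  refine Finset.sum_congr rfl fun i _ => ?_
  rw [← Finset.mul_sum, Finset.sum_const, Finset.card_univ, Fintype.card_fin, nsmul_eq_mul,
    ← mul_assoc, mul_inv_cancel₀ hm', one_mul]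

lemma sumE1 (hg : 0 < g) (hh : 0 < h) (hm : 0 < m) (r : (Fin g × Fin h) × Fin m → ℝ)
    (j : Fin h) :
    ∑ i : Fin g, ∑ k : Fin m, (Emat g h m 1 *ᵥ r) ((i, j), k) = 0 := by
  have hg' : (g:ℝ) ≠ 0 := Nat.cast_ne_zero.2 hg.ne'
  have hh' : (h:ℝ) ≠ 0 := Nat.cast_ne_zero.2 hh.ne'
  have hm' : (m:ℝ) ≠ 0 := Nat.cast_ne_zero.2 hm.ne'
  simp only [Emat, Matrix.mulVec, dotProduct, Fintype.sum_prod_type_right,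
    Matrix.kroneckerMap_apply]
  simp only [Cmat, Jbar, Jmat, Matrix.sub_apply, Matrix.smul_apply, Matrix.one_apply,
    Matrix.of_apply, smul_eq_mul, mul_one,
    ite_mul, one_mul, zero_mul, mul_ite, mul_zero, sub_mul, mul_sub,
    Finset.sum_sub_distrib, Finset.sum_const_zero, sum_ite_irrel,
    Finset.sum_ite_eq, Finset.sum_ite_eq', Finset.mem_univ, if_true]
  simp only [← Finset.mul_sum, ← Finset.sum_mul, Finset.sum_const, Finset.card_univ, Fintype.card_fin,
    nsmul_eq_mul, sum_ite_irrel, Finset.sum_ite_eq, Finset.sum_ite_eq', Finset.mem_univ, if_true]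
  rw [Finset.sum_comm (f := fun i k => r ((i, j), k)),
    sum_comm3 (f := fun a b c => r ((a, b), c)),
    show (∑ i : Fin g, ∑ k : Fin m, ∑ j' : Fin h, r ((i, j'), k))
        = ∑ i : Fin g, ∑ j' : Fin h, ∑ k : Fin m, r ((i, j'), k) from
      Finset.sum_congr rfl fun _ _ => Finset.sum_comm]
  field_simp
  ring

lemma sumE2 (hg : 0 < g) (hh : 0 < h) (hm : 0 < m) (r : (Fin g × Fin h) × Fin m → ℝ)
    (j : Fin h) :
    ∑ i : Fin g, ∑ k : Fin m, (Emat g h m 2 *ᵥ r) ((i, j), k) = 0 := by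
  have hg' : (g:ℝ) ≠ 0 := Nat.cast_ne_zero.2 hg.ne'
  have hh' : (h:ℝ) ≠ 0 := Nat.cast_ne_zero.2 hh.ne'
  have hm' : (m:ℝ) ≠ 0 := Nat.cast_ne_zero.2 hm.ne'
  simp only [Emat, Matrix.mulVec, dotProduct, Fintype.sum_prod_type_right,
    Matrix.kroneckerMap_apply]
  simp only [Cmat, Jbar, Jmat, Matrix.sub_apply, Matrix.smul_apply, Matrix.one_apply,
    Matrix.of_apply, smul_eq_mul, mul_one,
    ite_mul, one_mul, zero_mul, mul_ite, mul_zero, sub_mul, mul_sub,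
    Finset.sum_sub_distrib, Finset.sum_const_zero, sum_ite_irrel,
    Finset.sum_ite_eq, Finset.sum_ite_eq', Finset.mem_univ, if_true]
  simp only [← Finset.mul_sum, ← Finset.sum_mul, Finset.sum_const, Finset.card_univ, Fintype.card_fin,
    nsmul_eq_mul, sum_ite_irrel, Finset.sum_ite_eq, Finset.sum_ite_eq', Finset.mem_univ, if_true]
  rw [sum_comm3 (f := fun a b c => r ((a, b), c)),
    show (∑ i : Fin g, ∑ k : Fin m, ∑ j' : Fin h, r ((i, j'), k))
        = ∑ i : Fin g, ∑ j' : Fin h, ∑ k : Fin m, r ((i, j'), k) from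
      Finset.sum_congr rfl fun _ _ => Finset.sum_comm]
  field_simp
  ring

lemma sumE3 (hg : 0 < g) (hh : 0 < h) (hm : 0 < m) (r : (Fin g × Fin h) × Fin m → ℝ)
    (j : Fin h) :
    ∑ i : Fin g, ∑ k : Fin m, (Emat g h m 3 *ᵥ r) ((i, j), k) =
      (∑ i : Fin g, ∑ k : Fin m, r ((i, j), k)) -
      ((h : ℝ))⁻¹ * ∑ i : Fin g, ∑ j' : Fin h, ∑ k : Fin m, r ((i, j'), k) := by
  have hg' : (g:ℝ) ≠ 0 := Nat.cast_ne_zero.2 hg.ne'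
  have hh' : (h:ℝ) ≠ 0 := Nat.cast_ne_zero.2 hh.ne'
  have hm' : (m:ℝ) ≠ 0 := Nat.cast_ne_zero.2 hm.ne'
  simp only [Emat, Matrix.mulVec, dotProduct, Fintype.sum_prod_type_right,
    Matrix.kroneckerMap_apply]
  simp only [Cmat, Jbar, Jmat, Matrix.sub_apply, Matrix.smul_apply, Matrix.one_apply,
    Matrix.of_apply, smul_eq_mul, mul_one,
    ite_mul, one_mul, zero_mul, mul_ite, mul_zero, sub_mul, mul_sub,
    Finset.sum_sub_distrib, Finset.sum_const_zero, sum_ite_irrel,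
    Finset.sum_ite_eq, Finset.sum_ite_eq', Finset.mem_univ, if_true]
  simp only [← Finset.mul_sum, ← Finset.sum_mul, Finset.sum_const, Finset.card_univ, Fintype.card_fin,
    nsmul_eq_mul, sum_ite_irrel, Finset.sum_ite_eq, Finset.sum_ite_eq', Finset.mem_univ, if_true]
  rw [sum_comm3 (f := fun a b c => r ((a, b), c)),
    Finset.sum_comm (f := fun i k => r ((i, j), k))]
  field_simp

lemma sumE4 (hg : 0 < g) (hh : 0 < h) (hm : 0 < m) (r : (Fin g × Fin h) × Fin m → ℝ)
    (j : Fin h) :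
    ∑ i : Fin g, ∑ k : Fin m, (Emat g h m 4 *ᵥ r) ((i, j), k) =
      ((h : ℝ))⁻¹ * ∑ i : Fin g, ∑ j' : Fin h, ∑ k : Fin m, r ((i, j'), k) := by
  have hg' : (g:ℝ) ≠ 0 := Nat.cast_ne_zero.2 hg.ne'
  have hh' : (h:ℝ) ≠ 0 := Nat.cast_ne_zero.2 hh.ne'
  have hm' : (m:ℝ) ≠ 0 := Nat.cast_ne_zero.2 hm.ne'
  simp only [Emat, Matrix.mulVec, dotProduct, Fintype.sum_prod_type_right,
    Matrix.kroneckerMap_apply]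
  simp only [Cmat, Jbar, Jmat, Matrix.sub_apply, Matrix.smul_apply, Matrix.one_apply,
    Matrix.of_apply, smul_eq_mul, mul_one,
    ite_mul, one_mul, zero_mul, mul_ite, mul_zero, sub_mul, mul_sub,
    Finset.sum_sub_distrib, Finset.sum_const_zero, sum_ite_irrel,
    Finset.sum_ite_eq, Finset.sum_ite_eq', Finset.mem_univ, if_true]
  simp only [← Finset.mul_sum, ← Finset.sum_mul, Finset.sum_const, Finset.card_univ, Fintype.card_fin,
    nsmul_eq_mul]
  rw [sum_comm3 (f := fun a b c => r ((a, b), c))]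
  field_simp

end Esums

/-- Explicit form of the BLUP of the `j`-th column random effect applied to a residual
vector `r`: the `j`-th entry of `σβ² Z2ᵀ V⁻¹ r` equals
`(gmσβ²/λ3) r̄_{·j} − gmσβ² (1/λ3 − 1/λ4) r̄`. -/

theorem colBLUP_explicit (g h m : ℕ) (hg : 0 < g) (hh : 0 < h) (hm : 0 < m)
    (σα2 σβ2 σγ2 σe2 : ℝ) (hα : 0 ≤ σα2) (hβ : 0 ≤ σβ2) (hγ : 0 ≤ σγ2) (he : 0 < σe2)
    (r : (Fin g × Fin h) × Fin m → ℝ) (j : Fin h) :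
    (σβ2 • ((Z2 g h m)ᵀ *ᵥ (Vinv g h m σα2 σβ2 σγ2 σe2 *ᵥ r))) j =
      (g * m * σβ2 / (σe2 + m * σγ2 + g * m * σβ2)) * colAvg g h m r j -
      g * m * σβ2 * ((σe2 + m * σγ2 + g * m * σβ2)⁻¹ -
        (σe2 + m * σγ2 + h * m * σα2 + g * m * σβ2)⁻¹) * grandAvg g h m r := by
  have hg' : (g:ℝ) ≠ 0 := Nat.cast_ne_zero.2 hg.ne'
  have hh' : (h:ℝ) ≠ 0 := Nat.cast_ne_zero.2 hh.ne'
  have hm' : (m:ℝ) ≠ 0 := Nat.cast_ne_zero.2 hm.ne'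
  have hl3 : (σe2 + m * σγ2 + g * m * σβ2) ≠ 0 := by positivity
  have hl4 : (σe2 + m * σγ2 + h * m * σα2 + g * m * σβ2) ≠ 0 := by positivity
  rw [Pi.smul_apply, smul_eq_mul, Z2t_mulVec]
  simp only [Vinv, Matrix.add_mulVec, Matrix.smul_mulVec, Pi.add_apply, Pi.smul_apply,
    smul_eq_mul, Finset.sum_add_distrib, ← Finset.mul_sum]
  rw [sumE0 hm r j, sumE1 hg hh hm r j, sumE2 hg hh hm r j, sumE3 hg hh hm r j,
    sumE4 hg hh hm r j, colAvg, grandAvg]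
  field_simp
  ring
end

section
/- For every vector r ∈ ℝ^n and every cell index (i,j), the (i,j)-th entry of the gh-vector σγ²·Z3^T·V^{-1}·r equals (mσγ²/λ1)·r̄_{ij} − mσγ²·(1/λ1 − 1/λ2)·r̄_{i·} − mσγ²·(1/λ1 − 1/λ3)·r̄_{·j} + mσγ²·(1/λ1 − 1/λ2 − 1/λ3 + 1/λ4)·r̄, where V^{-1} = λ0^{-1}E0 + λ1^{-1}E1 + λ2^{-1}E2 + λ3^{-1}E3 + λ4^{-1}E4. (This is the explicit form of the BLUP of the (i,j)-th interaction random effect applied to the residual vector r.) -/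
open Matrix Kronecker BigOperators

/-- The design matrix `Z3 = I_g ⊗ I_h ⊗ 1_m` of the interaction random effects,
with columns indexed by pairs `(i,j)`. -/
noncomputable def Z3 (g h m : ℕ) : Matrix ((Fin g × Fin h) × Fin m) (Fin g × Fin h) ℝ :=
  Matrix.of fun p ij => if p.1 = ij then 1 else 0

/-- The cell average `r̄_{ij} = m⁻¹ Σ_k r_{ijk}` of a vector `r ∈ ℝⁿ`. -/
noncomputable def cellAvg (g h m : ℕ) (r : (Fin g × Fin h) × Fin m → ℝ)
    (ij : Fin g × Fin h) : ℝ :=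
  (m : ℝ)⁻¹ * ∑ k : Fin m, r (ij, k)

lemma sumJ {a : ℕ} (f : Fin a → ℝ) (i : Fin a) :
    ∑ i', Jbar a i i' * f i' = (a:ℝ)⁻¹ * ∑ i', f i' := by
  simp [Jbar, Jmat, Finset.mul_sum]

lemma sumC {a : ℕ} (f : Fin a → ℝ) (i : Fin a) :
    ∑ i', Cmat a i i' * f i' = f i - (a:ℝ)⁻¹ * ∑ i', f i' := by
  simp [Cmat, Jbar, Jmat, sub_mul, Finset.sum_sub_distrib, Finset.mul_sum, Matrix.one_apply,
    ite_mul, Finset.sum_ite_eq, Finset.sum_ite_eq']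

lemma sumOne {a : ℕ} (f : Fin a → ℝ) (i : Fin a) :
    ∑ i', (1 : Matrix (Fin a) (Fin a) ℝ) i i' * f i' = f i := by
  simp [Matrix.one_apply, ite_mul, Finset.sum_ite_eq, Finset.sum_ite_eq']

lemma mulVec_kron {g h m : ℕ} (A : Matrix (Fin g) (Fin g) ℝ) (B : Matrix (Fin h) (Fin h) ℝ)
    (C : Matrix (Fin m) (Fin m) ℝ) (r : (Fin g × Fin h) × Fin m → ℝ) (i : Fin g) (j : Fin h)
    (k : Fin m) :
    ((A ⊗ₖ B ⊗ₖ C) *ᵥ r) ((i,j),k)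
      = ∑ i', A i i' * ∑ j', B j j' * ∑ k', C k k' * r ((i',j'),k') := by
  simp [Matrix.mulVec, dotProduct, Fintype.sum_prod_type, kroneckerMap_apply, mul_assoc,
    Finset.mul_sum]

set_option maxHeartbeats 1000000 in
/-- Explicit form of the BLUP of the `(i,j)`-th interaction random effect applied to a
residual vector `r`: the `(i,j)`-th entry of `σγ² Z3ᵀ V⁻¹ r` equals
`(mσγ²/λ1) r̄_{ij} − mσγ²(1/λ1 − 1/λ2) r̄_{i·} − mσγ²(1/λ1 − 1/λ3) r̄_{·j}
 + mσγ²(1/λ1 − 1/λ2 − 1/λ3 + 1/λ4) r̄`. -/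
theorem interactionBLUP_explicit (g h m : ℕ) (hg : 0 < g) (hh : 0 < h) (hm : 0 < m)
    (σα2 σβ2 σγ2 σe2 : ℝ) (hα : 0 ≤ σα2) (hβ : 0 ≤ σβ2) (hγ : 0 ≤ σγ2) (he : 0 < σe2)
    (r : (Fin g × Fin h) × Fin m → ℝ) (i : Fin g) (j : Fin h) :
    (σγ2 • ((Z3 g h m)ᵀ *ᵥ (Vinv g h m σα2 σβ2 σγ2 σe2 *ᵥ r))) (i, j) =
      (m * σγ2 / (σe2 + m * σγ2)) * cellAvg g h m r (i, j) -
      m * σγ2 * ((σe2 + m * σγ2)⁻¹ - (σe2 + m * σγ2 + h * m * σα2)⁻¹) * rowAvg g h m r i -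
      m * σγ2 * ((σe2 + m * σγ2)⁻¹ - (σe2 + m * σγ2 + g * m * σβ2)⁻¹) * colAvg g h m r j +
      m * σγ2 * ((σe2 + m * σγ2)⁻¹ - (σe2 + m * σγ2 + h * m * σα2)⁻¹ -
        (σe2 + m * σγ2 + g * m * σβ2)⁻¹ +
        (σe2 + m * σγ2 + h * m * σα2 + g * m * σβ2)⁻¹) * grandAvg g h m r := by
  have hm' : (m:ℝ) ≠ 0 := Nat.cast_ne_zero.mpr hm.ne'
  have hg' : (g:ℝ) ≠ 0 := Nat.cast_ne_zero.mpr hg.ne'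
  have hh' : (h:ℝ) ≠ 0 := Nat.cast_ne_zero.mpr hh.ne'
  have hZ : ∀ v : (Fin g × Fin h) × Fin m → ℝ,
      ((Z3 g h m)ᵀ *ᵥ v) (i,j) = ∑ k, v ((i,j),k) := by
    intro v
    simp [Matrix.mulVec, dotProduct, Z3, Fintype.sum_prod_type, Prod.ext_iff, ite_and,
      Finset.sum_ite_eq, Finset.sum_ite_eq']
    rw [Finset.sum_comm]
    simp
  rw [Pi.smul_apply, hZ]
  have e0 : Emat g h m 0
      = (1 : Matrix (Fin g) (Fin g) ℝ) ⊗ₖ (1 : Matrix (Fin h) (Fin h) ℝ) ⊗ₖ Cmat m := rfl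
  have e1 : Emat g h m 1 = Cmat g ⊗ₖ Cmat h ⊗ₖ Jbar m := rfl
  have e2 : Emat g h m 2 = Cmat g ⊗ₖ Jbar h ⊗ₖ Jbar m := rfl
  have e3 : Emat g h m 3 = Jbar g ⊗ₖ Cmat h ⊗ₖ Jbar m := rfl
  have e4 : Emat g h m 4 = Jbar g ⊗ₖ Jbar h ⊗ₖ Jbar m := rfl
  set c1 := (σe2 + (m:ℝ) * σγ2)⁻¹ with hc1
  set c2 := (σe2 + (m:ℝ) * σγ2 + (h:ℝ) * (m:ℝ) * σα2)⁻¹ with hc2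
  set c3 := (σe2 + (m:ℝ) * σγ2 + (g:ℝ) * (m:ℝ) * σβ2)⁻¹ with hc3
  set c4 := (σe2 + (m:ℝ) * σγ2 + (h:ℝ) * (m:ℝ) * σα2 + (g:ℝ) * (m:ℝ) * σβ2)⁻¹ with hc4
  set Sc := ∑ k', r ((i,j),k') with hSc
  set Sr := ∑ j', ∑ k', r ((i,j'),k') with hSr
  set So := ∑ i', ∑ k', r ((i',j),k') with hSo
  set Sg := ∑ i', ∑ j', ∑ k', r ((i',j'),k') with hSg
  have key : ∀ k, (Vinv g h m σα2 σβ2 σγ2 σe2 *ᵥ r) ((i,j),k)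
      = σe2⁻¹ * r ((i,j),k)
        + ( -(σe2⁻¹ * ((m:ℝ)⁻¹ * Sc))
            + c1 * ((m:ℝ)⁻¹ * Sc - (h:ℝ)⁻¹ * ((m:ℝ)⁻¹ * Sr) - (g:ℝ)⁻¹ * ((m:ℝ)⁻¹ * So)
                + (g:ℝ)⁻¹ * ((h:ℝ)⁻¹ * ((m:ℝ)⁻¹ * Sg)))
            + c2 * ((h:ℝ)⁻¹ * ((m:ℝ)⁻¹ * Sr) - (g:ℝ)⁻¹ * ((h:ℝ)⁻¹ * ((m:ℝ)⁻¹ * Sg)))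
            + c3 * ((g:ℝ)⁻¹ * ((m:ℝ)⁻¹ * So) - (g:ℝ)⁻¹ * ((h:ℝ)⁻¹ * ((m:ℝ)⁻¹ * Sg)))
            + c4 * ((g:ℝ)⁻¹ * ((h:ℝ)⁻¹ * ((m:ℝ)⁻¹ * Sg))) ) := by
    intro k
    simp only [Vinv, e0, e1, e2, e3, e4, Matrix.add_mulVec, Matrix.smul_mulVec,
      Pi.add_apply, Pi.smul_apply, smul_eq_mul, mulVec_kron, sumJ, sumC, sumOne]
    simp only [mul_sub, Finset.sum_sub_distrib, ← Finset.mul_sum, ← hSc, ← hSr, ← hSo, ← hSg,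
      ← hc1, ← hc2, ← hc3, ← hc4]
    ring
  rw [Finset.sum_congr rfl fun k _ => key k]
  simp only [Finset.sum_add_distrib, ← Finset.mul_sum, Finset.sum_const, Finset.card_univ,
    Fintype.card_fin, nsmul_eq_mul, ← hSc]
  simp only [cellAvg, rowAvg, colAvg, grandAvg, div_eq_mul_inv, mul_inv, smul_eq_mul,
    ← hSc, ← hSr, ← hSo, ← hSg, ← hc1, ← hc2, ← hc3, ← hc4]
  field_simp
  ring
end

section
/- In the two-way crossed model without interaction, the row and column linear EBLUP-error terms have cross-covariance Cov(ē_{i·} − g^{-1}Σ_{s=1}^g Ĥ^{(a)}_{is}·α_s, ē_{·j} − h^{-1}Σ_{t=1}^h Ĥ^{(b)}_{jt}·β_t) = σe²/(gh) for every 1 ≤ i ≤ g and 1 ≤ j ≤ h. (Hence, after normalisation by √g·√g with g/h bounded, these cross-covariances vanish asymptotically, giving the block-diagonal asymptotic covariance of the row and column EBLUPs.) -/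
open Matrix MeasureTheory ProbabilityTheory BigOperators

/-- Covariance `Cov(X,Y) = E[XY] − E[X]E[Y]` of two real random variables. -/
noncomputable def Cov {Ω : Type*} [MeasureSpace Ω] (X Y : Ω → ℝ) : ℝ :=
  (∫ ω, X ω * Y ω) - (∫ ω, X ω) * (∫ ω, Y ω)

/-- Centered row covariate `x_{s(c)} = x_s − x̄` where `x̄ = g⁻¹ Σ_s x_s`. -/
noncomputable def xc (g p : ℕ) (x : Fin g → Fin p → ℝ) (s : Fin g) : Fin p → ℝ :=
  x s - (g : ℝ)⁻¹ • ∑ u : Fin g, x u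

/-- `D̂ = g⁻¹ Σ_s x_{s(c)} x_{s(c)}ᵀ`. -/
noncomputable def Dhat (g p : ℕ) (x : Fin g → Fin p → ℝ) : Matrix (Fin p) (Fin p) ℝ :=
  (g : ℝ)⁻¹ • ∑ s : Fin g, vecMulVec (xc g p x s) (xc g p x s)

/-- `Ĥ^{(a)}_{su} = 1 + x_{s(c)}ᵀ D̂⁻¹ x_{u(c)}`. -/
noncomputable def Hhat (g p : ℕ) (x : Fin g → Fin p → ℝ) (s u : Fin g) : ℝ :=
  1 + xc g p x s ⬝ᵥ ((Dhat g p x)⁻¹ *ᵥ xc g p x u)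

/-- Centered column covariate `w_{t(c)} = w_t − w̄` where `w̄ = h⁻¹ Σ_t w_t`. -/
noncomputable def wc (h q : ℕ) (w : Fin h → Fin q → ℝ) (t : Fin h) : Fin q → ℝ :=
  w t - (h : ℝ)⁻¹ • ∑ v : Fin h, w v

/-- `D̂_b = h⁻¹ Σ_t w_{t(c)} w_{t(c)}ᵀ`. -/
noncomputable def Dhatb (h q : ℕ) (w : Fin h → Fin q → ℝ) : Matrix (Fin q) (Fin q) ℝ :=
  (h : ℝ)⁻¹ • ∑ t : Fin h, vecMulVec (wc h q w t) (wc h q w t)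

/-- `Ĥ^{(b)}_{tv} = 1 + w_{t(c)}ᵀ D̂_b⁻¹ w_{v(c)}`. -/
noncomputable def Hhatb (h q : ℕ) (w : Fin h → Fin q → ℝ) (t v : Fin h) : ℝ :=
  1 + wc h q w t ⬝ᵥ ((Dhatb h q w)⁻¹ *ᵥ wc h q w v)


section Aux
variable {Ω : Type*} [MeasureSpace Ω] [IsProbabilityMeasure (ℙ : Measure Ω)]

omit [IsProbabilityMeasure (ℙ : Measure Ω)] in
lemma memL2_mul_integrable {f g : Ω → ℝ} (hf : MeasureTheory.MemLp f 2 ℙ)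
    (hg : MeasureTheory.MemLp g 2 ℙ) :
    MeasureTheory.Integrable (fun ω => f ω * g ω) ℙ := by
  have h : MeasureTheory.MemLp (f • g) 1 ℙ :=
    hg.smul hf (hpqr := ⟨by simp [one_div, ENNReal.inv_two_add_inv_two]⟩)
  rw [MeasureTheory.memLp_one_iff_integrable] at h
  exact h

omit [IsProbabilityMeasure (ℙ : Measure Ω)] in
lemma integral_sum_mul_sum {ι κ : Type*} [Fintype ι] [Fintype κ]
    (F : ι → Ω → ℝ) (G : κ → Ω → ℝ) (hF : ∀ i, MeasureTheory.MemLp (F i) 2 ℙ)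
    (hG : ∀ k, MeasureTheory.MemLp (G k) 2 ℙ) :
    ∫ ω, (∑ i, F i ω) * (∑ k, G k ω) = ∑ i, ∑ k, ∫ ω, F i ω * G k ω := by
  have hpt : ∀ ω, (∑ i, F i ω) * (∑ k, G k ω) = ∑ i, ∑ k, F i ω * G k ω := by
    intro ω; rw [Finset.sum_mul_sum]
  simp_rw [hpt]
  rw [MeasureTheory.integral_finset_sum]
  · exact Finset.sum_congr rfl fun i _ => MeasureTheory.integral_finset_sum _
      (fun k _ => memL2_mul_integrable (hF i) (hG k))
  · exact fun i _ => MeasureTheory.integrable_finset_sum _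
      fun k _ => memL2_mul_integrable (hF i) (hG k)

end Aux

/-- In the two-way crossed model without interaction, the row and column linear
EBLUP-error terms have cross-covariance
`Cov(ē_{i·} − g⁻¹ Σ_s Ĥ^{(a)}_{is} α_s, ē_{·j} − h⁻¹ Σ_t Ĥ^{(b)}_{jt} β_t) = σe²/(gh)`. -/
theorem row_col_eblup_error_cross_covariance {Ω : Type*} [MeasureSpace Ω]
    [IsProbabilityMeasure (ℙ : Measure Ω)]
    (g h p q : ℕ) (hg : 1 ≤ g) (hh : 1 ≤ h) (hp : 1 ≤ p) (hq : 1 ≤ q)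
    (x : Fin g → Fin p → ℝ) (hDa : IsUnit (Dhat g p x).det)
    (w : Fin h → Fin q → ℝ) (hDb : IsUnit (Dhatb h q w).det)
    (σα2 σβ2 σe2 : ℝ) (hσα : 0 ≤ σα2) (hσβ : 0 ≤ σβ2) (hσe : 0 ≤ σe2)
    (α : Fin g → Ω → ℝ) (β : Fin h → Ω → ℝ) (e : Fin g × Fin h → Ω → ℝ)
    (hindep : iIndepFun (Sum.elim α (Sum.elim β e)) ℙ)
    (hαL2 : ∀ s, MemLp (α s) 2 ℙ) (hβL2 : ∀ t, MemLp (β t) 2 ℙ)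
    (heL2 : ∀ ij, MemLp (e ij) 2 ℙ)
    (hα0 : ∀ s, ∫ ω, α s ω = 0) (hβ0 : ∀ t, ∫ ω, β t ω = 0)
    (he0 : ∀ ij, ∫ ω, e ij ω = 0)
    (hαvar : ∀ s, Cov (α s) (α s) = σα2) (hβvar : ∀ t, Cov (β t) (β t) = σβ2)
    (hevar : ∀ ij, Cov (e ij) (e ij) = σe2) :
    ∀ (i : Fin g) (j : Fin h),
      Cov (fun ω => (h : ℝ)⁻¹ * ∑ j' : Fin h, e (i, j') ω
              - (g : ℝ)⁻¹ * ∑ s : Fin g, Hhat g p x i s * α s ω)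
          (fun ω => (g : ℝ)⁻¹ * ∑ i' : Fin g, e (i', j) ω
              - (h : ℝ)⁻¹ * ∑ t : Fin h, Hhatb h q w j t * β t ω)
        = σe2 / (g * h) := by
  intro i j
  have hgne : (g : ℝ) ≠ 0 := by
    have : (0 : ℝ) < g := by exact_mod_cast Nat.lt_of_lt_of_le Nat.zero_lt_one hg
    exact ne_of_gt this
  have hhne : (h : ℝ) ≠ 0 := by
    have : (0 : ℝ) < h := by exact_mod_cast Nat.lt_of_lt_of_le Nat.zero_lt_one hh
    exact ne_of_gt this
  -- basic integrabilities / L2 facts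
  have heI : ∀ ij, Integrable (e ij) ℙ := fun ij => (heL2 ij).integrable one_le_two
  have hαI : ∀ s, Integrable (α s) ℙ := fun s => (hαL2 s).integrable one_le_two
  have hβI : ∀ t, Integrable (β t) ℙ := fun t => (hβL2 t).integrable one_le_two
  set Z : (Fin g ⊕ (Fin h ⊕ Fin g × Fin h)) → Ω → ℝ := Sum.elim α (Sum.elim β e) with hZdef
  have hZL2 : ∀ u, MemLp (Z u) 2 ℙ := by
    rintro (s | t | ij)
    exacts [hαL2 s, hβL2 t, heL2 ij]
  have key : ∀ u v, u ≠ v → (∫ ω, Z u ω * Z v ω) = (∫ ω, Z u ω) * (∫ ω, Z v ω) := fun u v huv =>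
    (hindep.indepFun huv).integral_mul_eq_mul_integral (hZL2 u).aestronglyMeasurable (hZL2 v).aestronglyMeasurable
  -- zero cross-moments
  have heα : ∀ ij s, (∫ ω, e ij ω * α s ω) = 0 := by
    intro ij s
    have := key (Sum.inr (Sum.inr ij)) (Sum.inl s) (by simp)
    simpa [hZdef, he0 ij, hα0 s] using this
  have heβ : ∀ ij t, (∫ ω, e ij ω * β t ω) = 0 := by
    intro ij t
    have := key (Sum.inr (Sum.inr ij)) (Sum.inr (Sum.inl t)) (by simp)
    simpa [hZdef, he0 ij, hβ0 t] using this
  have hαβ : ∀ s t, (∫ ω, α s ω * β t ω) = 0 := by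
    intro s t
    have := key (Sum.inl s) (Sum.inr (Sum.inl t)) (by simp)
    simpa [hZdef, hα0 s, hβ0 t] using this
  have hee : ∀ ij kl, (∫ ω, e ij ω * e kl ω) = if ij = kl then σe2 else 0 := by
    intro ij kl
    by_cases hik : ij = kl
    · subst hik
      rw [if_pos rfl]
      have hv := hevar ij
      rw [Cov, he0 ij] at hv
      simpa using hv
    · have := key (Sum.inr (Sum.inr ij)) (Sum.inr (Sum.inr kl))
        (by simp [hik])
      simp only [hZdef, Sum.elim_inr] at this
      rw [if_neg hik, this, he0 ij, zero_mul]
  -- the four component families (with scalar factors folded in)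
  set A : Fin h → Ω → ℝ := fun j' ω => (h : ℝ)⁻¹ * e (i, j') ω with hA
  set B : Fin g → Ω → ℝ := fun s ω => (g : ℝ)⁻¹ * (Hhat g p x i s * α s ω) with hB
  set C : Fin g → Ω → ℝ := fun i' ω => (g : ℝ)⁻¹ * e (i', j) ω with hC
  set D : Fin h → Ω → ℝ := fun t ω => (h : ℝ)⁻¹ * (Hhatb h q w j t * β t ω) with hD
  have hAL2 : ∀ j', MemLp (A j') 2 ℙ := fun j' => (heL2 (i, j')).const_mul _
  have hBL2 : ∀ s, MemLp (B s) 2 ℙ := fun s => ((hαL2 s).const_mul _).const_mul _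
  have hCL2 : ∀ i', MemLp (C i') 2 ℙ := fun i' => (heL2 (i', j)).const_mul _
  have hDL2 : ∀ t, MemLp (D t) 2 ℙ := fun t => ((hβL2 t).const_mul _).const_mul _
  have hX : ∀ ω, ((h : ℝ)⁻¹ * ∑ j' : Fin h, e (i, j') ω
      - (g : ℝ)⁻¹ * ∑ s : Fin g, Hhat g p x i s * α s ω)
      = (∑ j', A j' ω) - (∑ s, B s ω) := by
    intro ω; simp [hA, hB, Finset.mul_sum]
  have hY : ∀ ω, ((g : ℝ)⁻¹ * ∑ i' : Fin g, e (i', j) ω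
      - (h : ℝ)⁻¹ * ∑ t : Fin h, Hhatb h q w j t * β t ω)
      = (∑ i', C i' ω) - (∑ t, D t ω) := by
    intro ω; simp [hC, hD, Finset.mul_sum]
  rw [Cov]
  simp only [hX, hY]
  -- means are zero
  have hEA : (∫ ω, (∑ j', A j' ω) - (∑ s, B s ω)) = 0 := by
    rw [integral_sub (integrable_finset_sum _ fun j' _ => ((heI _).const_mul _))
      (integrable_finset_sum _ fun s _ => (((hαI _).const_mul _).const_mul _)),
      integral_finset_sum _ (fun j' _ => ((heI _).const_mul _)),
      integral_finset_sum _ (fun s _ => (((hαI _).const_mul _).const_mul _))]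
    simp [hA, hB, integral_const_mul, he0, hα0]
  have hEC : (∫ ω, (∑ i', C i' ω) - (∑ t, D t ω)) = 0 := by
    rw [integral_sub (integrable_finset_sum _ fun i' _ => ((heI _).const_mul _))
      (integrable_finset_sum _ fun t _ => (((hβI _).const_mul _).const_mul _)),
      integral_finset_sum _ (fun i' _ => ((heI _).const_mul _)),
      integral_finset_sum _ (fun t _ => (((hβI _).const_mul _).const_mul _))]
    simp [hC, hD, integral_const_mul, he0, hβ0]
  rw [hEA, hEC, mul_zero, sub_zero]
  -- expand the product integral
  have hptwise : ∀ ω, ((∑ j', A j' ω) - (∑ s, B s ω)) * ((∑ i', C i' ω) - (∑ t, D t ω))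
      = ((∑ j', A j' ω) * (∑ i', C i' ω) - (∑ j', A j' ω) * (∑ t, D t ω))
        - ((∑ s, B s ω) * (∑ i', C i' ω) - (∑ s, B s ω) * (∑ t, D t ω)) := by
    intro ω; ring
  have hintAC : Integrable (fun ω => (∑ j', A j' ω) * (∑ i', C i' ω)) ℙ :=
    memL2_mul_integrable (memLp_finset_sum _ fun j' _ => hAL2 j')
      (memLp_finset_sum _ fun i' _ => hCL2 i')
  have hintAD : Integrable (fun ω => (∑ j', A j' ω) * (∑ t, D t ω)) ℙ :=
    memL2_mul_integrable (memLp_finset_sum _ fun j' _ => hAL2 j')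
      (memLp_finset_sum _ fun t _ => hDL2 t)
  have hintBC : Integrable (fun ω => (∑ s, B s ω) * (∑ i', C i' ω)) ℙ :=
    memL2_mul_integrable (memLp_finset_sum _ fun s _ => hBL2 s)
      (memLp_finset_sum _ fun i' _ => hCL2 i')
  have hintBD : Integrable (fun ω => (∑ s, B s ω) * (∑ t, D t ω)) ℙ :=
    memL2_mul_integrable (memLp_finset_sum _ fun s _ => hBL2 s)
      (memLp_finset_sum _ fun t _ => hDL2 t)
  have hintACD : Integrable (fun ω => (∑ j', A j' ω) * (∑ i', C i' ω)
      - (∑ j', A j' ω) * (∑ t, D t ω)) ℙ := hintAC.sub hintAD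
  have hintBCD : Integrable (fun ω => (∑ s, B s ω) * (∑ i', C i' ω)
      - (∑ s, B s ω) * (∑ t, D t ω)) ℙ := hintBC.sub hintBD
  rw [integral_congr_ae (Filter.Eventually.of_forall hptwise)]
  rw [integral_sub hintACD hintBCD,
    integral_sub hintAC hintAD, integral_sub hintBC hintBD,
    integral_sum_mul_sum A C hAL2 hCL2, integral_sum_mul_sum A D hAL2 hDL2,
    integral_sum_mul_sum B C hBL2 hCL2, integral_sum_mul_sum B D hBL2 hDL2]
  have hAC : ∀ j' i', (∫ ω, A j' ω * C i' ω)
      = (h : ℝ)⁻¹ * ((g : ℝ)⁻¹ * (if (i, j') = (i', j) then σe2 else 0)) := by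
    intro j' i'
    have : ∀ ω, A j' ω * C i' ω = (h : ℝ)⁻¹ * ((g : ℝ)⁻¹ * (e (i, j') ω * e (i', j) ω)) := by
      intro ω; simp [hA, hC]; ring
    simp_rw [this]
    rw [integral_const_mul, integral_const_mul, hee]
  have hAD : ∀ j' t, (∫ ω, A j' ω * D t ω) = 0 := by
    intro j' t
    have : ∀ ω, A j' ω * D t ω
        = (h : ℝ)⁻¹ * ((h : ℝ)⁻¹ * Hhatb h q w j t * (e (i, j') ω * β t ω)) := by
      intro ω; simp [hA, hD]; ring
    simp_rw [this]
    rw [integral_const_mul, integral_const_mul, heβ, mul_zero, mul_zero]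
  have hBC : ∀ s i', (∫ ω, B s ω * C i' ω) = 0 := by
    intro s i'
    have : ∀ ω, B s ω * C i' ω
        = (g : ℝ)⁻¹ * ((g : ℝ)⁻¹ * Hhat g p x i s * (e (i', j) ω * α s ω)) := by
      intro ω; simp [hB, hC]; ring
    simp_rw [this]
    rw [integral_const_mul, integral_const_mul, heα, mul_zero, mul_zero]
  have hBD : ∀ s t, (∫ ω, B s ω * D t ω) = 0 := by
    intro s t
    have : ∀ ω, B s ω * D t ω
        = (g : ℝ)⁻¹ * ((h : ℝ)⁻¹ * (Hhat g p x i s * Hhatb h q w j t) * (α s ω * β t ω)) := by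
      intro ω; simp [hB, hD]; ring
    simp_rw [this]
    rw [integral_const_mul, integral_const_mul, hαβ, mul_zero, mul_zero]
  simp_rw [hAC, hAD, hBC, hBD]
  simp only [Finset.sum_const_zero, sub_zero]
  have hdelta : ∀ (j' : Fin h) (i' : Fin g), ((i, j') = (i', j)) ↔ (i' = i ∧ j' = j) := by
    intro j' i'
    constructor
    · intro hp'; obtain ⟨h1, h2⟩ := Prod.mk.injEq .. ▸ hp'
      exact ⟨h1.symm, h2⟩
    · rintro ⟨rfl, rfl⟩; rfl
  have : (∑ j' : Fin h, ∑ i' : Fin g,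
      (h : ℝ)⁻¹ * ((g : ℝ)⁻¹ * (if (i, j') = (i', j) then σe2 else 0)))
      = (h : ℝ)⁻¹ * ((g : ℝ)⁻¹ * σe2) := by
    simp_rw [hdelta]
    have : ∀ j' : Fin h, (∑ i' : Fin g,
        (h : ℝ)⁻¹ * ((g : ℝ)⁻¹ * (if i' = i ∧ j' = j then σe2 else 0)))
        = if j' = j then (h : ℝ)⁻¹ * ((g : ℝ)⁻¹ * σe2) else 0 := by
      intro j'
      by_cases hj' : j' = j
      · subst hj'
        simp [Finset.sum_ite_eq']
      · simp [hj']
    simp_rw [this]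
    simp [Finset.sum_ite_eq']
  rw [this, div_eq_mul_inv, mul_inv]
  ring
end

section
/- In the two-way crossed model without interaction, define for each cell (i,j) the cell-level linear EBLUP-error term R_{ij} = ē_{i·} + ē_{·j} − g^{-1}Σ_{s=1}^g Ĥ^{(a)}_{is}·α_s − h^{-1}Σ_{t=1}^h Ĥ^{(b)}_{jt}·β_t. Then for all cells (i,j) and (i',j'), Cov(R_{ij}, R_{i'j'}) = σe²·(𝟙{i = i'}/h + 𝟙{j = j'}/g + 2/(gh)) + (σα²/g)·Ĥ^{(a)}_{ii'} + (σβ²/h)·Ĥ^{(b)}_{jj'}. In particular the cell-level terms are correlated even when i ≠ i' and j ≠ j'. -/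
open Matrix MeasureTheory ProbabilityTheory BigOperators

/-! ### Auxiliary lemmas -/

lemma integrable_mul_of_L2 {Ω : Type*} [MeasureSpace Ω] [IsProbabilityMeasure (ℙ : Measure Ω)]
    {f g : Ω → ℝ} (hf : MemLp f 2 ℙ) (hg : MemLp g 2 ℙ) :
    Integrable (fun ω => f ω * g ω) ℙ := by
  have h : MemLp (f • g) 1 ℙ := hg.smul hf
  simpa [smul_eq_mul, Pi.mul_def] using memLp_one_iff_integrable.mp h

lemma cov_linear_combo {Ω ι : Type*} [MeasureSpace Ω] [IsProbabilityMeasure (ℙ : Measure Ω)]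
    [Fintype ι] {Z : ι → Ω → ℝ}
    (hindep : iIndepFun Z ℙ)
    (hL2 : ∀ k, MemLp (Z k) 2 ℙ) (h0 : ∀ k, ∫ ω, Z k ω = 0)
    (c d : ι → ℝ) :
    Cov (fun ω => ∑ k, c k * Z k ω) (fun ω => ∑ k, d k * Z k ω)
      = ∑ k, c k * d k * (∫ ω, Z k ω * Z k ω) := by
  classical
  have hInt : ∀ k : ι, Integrable (Z k) ℙ := fun k => (hL2 k).integrable one_le_two
  have hmul : ∀ k l : ι, Integrable (fun ω => Z k ω * Z l ω) ℙ := fun k l =>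
    integrable_mul_of_L2 (hL2 k) (hL2 l)
  have h1 : (∫ ω, (∑ k, c k * Z k ω)) = 0 := by
    rw [integral_finset_sum _ (fun k _ => (hInt k).const_mul (c k))]
    simp [integral_const_mul, h0]
  have hexp : ∀ ω, (∑ k, c k * Z k ω) * (∑ l, d l * Z l ω)
      = ∑ k, ∑ l, (c k * d l) * (Z k ω * Z l ω) := by
    intro ω
    rw [Finset.sum_mul_sum]
    exact Finset.sum_congr rfl fun k _ => Finset.sum_congr rfl fun l _ => by ring
  have h2 : (∫ ω, (∑ k, c k * Z k ω) * (∑ l, d l * Z l ω))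
      = ∑ k, ∑ l, (c k * d l) * (∫ ω, Z k ω * Z l ω) := by
    simp_rw [hexp]
    rw [integral_finset_sum _ (fun k _ => integrable_finset_sum _
      (fun l _ => ((hmul k l).const_mul (c k * d l))))]
    refine Finset.sum_congr rfl fun k _ => ?_
    rw [integral_finset_sum _ (fun l _ => ((hmul k l).const_mul (c k * d l)))]
    exact Finset.sum_congr rfl fun l _ => integral_const_mul _ _
  have hoff : ∀ k l : ι, k ≠ l → (∫ ω, Z k ω * Z l ω) = 0 := by
    intro k l hkl
    have hind := hindep.indepFun hkl
    rw [hind.integral_fun_mul_eq_mul_integral (hL2 k).aestronglyMeasurable (hL2 l).aestronglyMeasurable,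
      h0 k, h0 l, mul_zero]
  unfold Cov
  rw [h1, h2, zero_mul, sub_zero]
  refine Finset.sum_congr rfl fun k _ => ?_
  rw [Finset.sum_eq_single k
    (fun l _ hlk => by rw [hoff k l (fun hh => hlk hh.symm), mul_zero])
    (fun hk => absurd (Finset.mem_univ k) hk)]

lemma dot_vecMulVec {m : Type*} [Fintype m] (P Q y : m → ℝ) :
    (P ⬝ᵥ y) * (Q ⬝ᵥ y) = P ⬝ᵥ (vecMulVec y y *ᵥ Q) := by
  simp only [dotProduct, vecMulVec, mulVec, Matrix.of_apply, Finset.sum_mul, Finset.mul_sum]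
  rw [Finset.sum_comm]
  exact Finset.sum_congr rfl fun a _ => Finset.sum_congr rfl fun b _ => by ring

lemma dotProduct_sum' {m ι : Type*} [Fintype m] [Fintype ι] (u : m → ℝ) (v : ι → m → ℝ) :
    u ⬝ᵥ (∑ s : ι, v s) = ∑ s : ι, u ⬝ᵥ v s := by
  simp only [dotProduct, Finset.sum_apply, Finset.mul_sum]
  rw [Finset.sum_comm]

lemma sum_mulVec' {m ι : Type*} [Fintype m] [Fintype ι] (M : ι → Matrix m m ℝ) (v : m → ℝ) :
    (∑ s : ι, M s) *ᵥ v = ∑ s : ι, (M s *ᵥ v) := by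
  ext a
  simp only [mulVec, dotProduct, Finset.sum_apply, Matrix.sum_apply, Finset.sum_mul]
  rw [Finset.sum_comm]

lemma sum_H_mul {n m : ℕ} (hn : 1 ≤ n) (z : Fin n → Fin m → ℝ)
    (hz : ∑ s : Fin n, z s = 0)
    (D : Matrix (Fin m) (Fin m) ℝ)
    (hD : D = (n : ℝ)⁻¹ • ∑ s : Fin n, vecMulVec (z s) (z s))
    (hDu : IsUnit D.det) (i u : Fin n) :
    ∑ s : Fin n, (1 + z i ⬝ᵥ (D⁻¹ *ᵥ z s)) * (1 + z u ⬝ᵥ (D⁻¹ *ᵥ z s))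
      = n * (1 + z i ⬝ᵥ (D⁻¹ *ᵥ z u)) := by
  have hn0 : (n : ℝ) ≠ 0 := Nat.cast_ne_zero.mpr (by omega)
  set A := D⁻¹ with hA
  have hDsym : Dᵀ = D := by
    rw [hD]; ext a b
    simp [Matrix.transpose_apply, Matrix.smul_apply, Matrix.sum_apply, vecMulVec_apply, mul_comm]
  have hAsym : Aᵀ = A := by
    rw [hA, Matrix.transpose_nonsing_inv, hDsym]
  have hflip : ∀ v w : Fin m → ℝ, v ⬝ᵥ (A *ᵥ w) = (A *ᵥ v) ⬝ᵥ w := by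
    intro v w
    rw [dotProduct_mulVec, ← Matrix.vecMul_transpose, hAsym]
  have hterm : ∀ s, (1 + z i ⬝ᵥ (A *ᵥ z s)) * (1 + z u ⬝ᵥ (A *ᵥ z s))
      = 1 + (A *ᵥ z i) ⬝ᵥ z s + (A *ᵥ z u) ⬝ᵥ z s
        + (A *ᵥ z i) ⬝ᵥ (vecMulVec (z s) (z s) *ᵥ (A *ᵥ z u)) := by
    intro s
    rw [hflip (z i), hflip (z u), ← dot_vecMulVec]
    ring
  simp_rw [hterm]
  rw [Finset.sum_add_distrib, Finset.sum_add_distrib, Finset.sum_add_distrib]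
  rw [← dotProduct_sum' (A *ᵥ z i) z, ← dotProduct_sum' (A *ᵥ z u) z, hz]
  have hquad : ∑ s : Fin n, (A *ᵥ z i) ⬝ᵥ (vecMulVec (z s) (z s) *ᵥ (A *ᵥ z u))
      = (n : ℝ) * (z i ⬝ᵥ (A *ᵥ z u)) := by
    rw [← dotProduct_sum', ← sum_mulVec']
    have hsumD : ∑ s : Fin n, vecMulVec (z s) (z s) = (n : ℝ) • D := by
      rw [hD, smul_smul, mul_inv_cancel₀ hn0, one_smul]
    rw [hsumD, smul_mulVec, dotProduct_smul, smul_eq_mul]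
    congr 1
    rw [Matrix.mulVec_mulVec, Matrix.mul_nonsing_inv D hDu, Matrix.one_mulVec, ← hflip]
  rw [hquad]
  simp only [dotProduct_zero, add_zero, Finset.sum_const, Finset.card_univ, Fintype.card_fin,
    nsmul_eq_mul, mul_one]
  ring

lemma quad_piece {n m : ℕ} (hn : 1 ≤ n) (z : Fin n → Fin m → ℝ)
    (hz : ∑ s : Fin n, z s = 0)
    (D : Matrix (Fin m) (Fin m) ℝ)
    (hD : D = (n : ℝ)⁻¹ • ∑ s : Fin n, vecMulVec (z s) (z s))
    (hDu : IsUnit D.det) (σ2 : ℝ) (i i' : Fin n) :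
    ∑ s : Fin n, -((n : ℝ)⁻¹ * (1 + z i ⬝ᵥ (D⁻¹ *ᵥ z s)))
        * -((n : ℝ)⁻¹ * (1 + z i' ⬝ᵥ (D⁻¹ *ᵥ z s))) * σ2
      = σ2 / n * (1 + z i ⬝ᵥ (D⁻¹ *ᵥ z i')) := by
  have hn0 : (n : ℝ) ≠ 0 := Nat.cast_ne_zero.mpr (by omega)
  have hre : ∀ s, -((n : ℝ)⁻¹ * (1 + z i ⬝ᵥ (D⁻¹ *ᵥ z s)))
      * -((n : ℝ)⁻¹ * (1 + z i' ⬝ᵥ (D⁻¹ *ᵥ z s))) * σ2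
      = (n : ℝ)⁻¹ * (n : ℝ)⁻¹ * σ2
        * ((1 + z i ⬝ᵥ (D⁻¹ *ᵥ z s)) * (1 + z i' ⬝ᵥ (D⁻¹ *ᵥ z s))) := fun s => by ring
  simp_rw [hre]
  rw [← Finset.mul_sum, sum_H_mul hn z hz D hD hDu i i']
  field_simp

lemma sum_centered {n m : ℕ} (hn : 1 ≤ n) (y : Fin n → Fin m → ℝ) :
    ∑ s : Fin n, (y s - (n : ℝ)⁻¹ • ∑ u : Fin n, y u) = 0 := by
  have hn0 : (n : ℝ) ≠ 0 := Nat.cast_ne_zero.mpr (by omega)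
  rw [Finset.sum_sub_distrib, Finset.sum_const, Finset.card_univ, Fintype.card_fin,
    ← Nat.cast_smul_eq_nsmul ℝ, smul_smul, mul_inv_cancel₀ hn0, one_smul, sub_self]

lemma sum_ite_ite {n : ℕ} (i i' : Fin n) (c d : ℝ) :
    ∑ a : Fin n, (if a = i then c else 0) * (if a = i' then d else 0)
      = if i = i' then c * d else 0 := by
  rw [Finset.sum_eq_single i (fun b _ hb => by simp [hb]) (by simp)]
  by_cases hii : i = i' <;> simp [hii]

lemma sum_ite_single {n : ℕ} (i : Fin n) (c : ℝ) :
    ∑ a : Fin n, (if a = i then c else 0) = c := by simp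

lemma prod_sum_split {g h : ℕ} (f : Fin g → ℝ) (k : Fin h → ℝ) :
    ∑ st : Fin g × Fin h, f st.1 * k st.2 = (∑ x, f x) * (∑ y, k y) := by
  rw [Finset.sum_mul_sum, Fintype.sum_prod_type]

lemma e_piece (g h : ℕ) (hg : 1 ≤ g) (hh : 1 ≤ h) (σe2 : ℝ) (i i' : Fin g) (j j' : Fin h) :
    ∑ st : Fin g × Fin h,
      ((if st.1 = i then (h : ℝ)⁻¹ else 0) + (if st.2 = j then (g : ℝ)⁻¹ else 0))
      * ((if st.1 = i' then (h : ℝ)⁻¹ else 0) + (if st.2 = j' then (g : ℝ)⁻¹ else 0)) * σe2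
    = σe2 * ((if i = i' then (h : ℝ)⁻¹ else 0) + (if j = j' then (g : ℝ)⁻¹ else 0)
        + 2 / (g * h)) := by
  have hg0 : (g : ℝ) ≠ 0 := Nat.cast_ne_zero.mpr (by omega)
  have hh0 : (h : ℝ) ≠ 0 := Nat.cast_ne_zero.mpr (by omega)
  have expand : ∀ st : Fin g × Fin h,
      ((if st.1 = i then (h : ℝ)⁻¹ else 0) + (if st.2 = j then (g : ℝ)⁻¹ else 0))
      * ((if st.1 = i' then (h : ℝ)⁻¹ else 0) + (if st.2 = j' then (g : ℝ)⁻¹ else 0)) * σe2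
      = ((if st.1 = i then (h : ℝ)⁻¹ else 0) * (if st.1 = i' then (h : ℝ)⁻¹ else 0) * σe2)
          * (1 : ℝ)
        + ((if st.1 = i then (h : ℝ)⁻¹ else 0) * σe2)
          * (if st.2 = j' then (g : ℝ)⁻¹ else 0)
        + ((if st.1 = i' then (h : ℝ)⁻¹ else 0) * σe2)
          * (if st.2 = j then (g : ℝ)⁻¹ else 0)
        + σe2 * ((if st.2 = j then (g : ℝ)⁻¹ else 0) * (if st.2 = j' then (g : ℝ)⁻¹ else 0)) := by
    intro st; ring
  simp_rw [expand, Finset.sum_add_distrib]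
  rw [prod_sum_split (fun x : Fin g => (if x = i then (h : ℝ)⁻¹ else 0)
      * (if x = i' then (h : ℝ)⁻¹ else 0) * σe2) (fun _ : Fin h => (1 : ℝ)),
    prod_sum_split (fun x : Fin g => (if x = i then (h : ℝ)⁻¹ else 0) * σe2)
      (fun y : Fin h => if y = j' then (g : ℝ)⁻¹ else 0),
    prod_sum_split (fun x : Fin g => (if x = i' then (h : ℝ)⁻¹ else 0) * σe2)
      (fun y : Fin h => if y = j then (g : ℝ)⁻¹ else 0),
    prod_sum_split (fun _ : Fin g => σe2)
      (fun y : Fin h => (if y = j then (g : ℝ)⁻¹ else 0) * (if y = j' then (g : ℝ)⁻¹ else 0))]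
  rw [← Finset.sum_mul, sum_ite_ite]
  rw [← Finset.sum_mul (f := fun a : Fin g => if a = i then (h : ℝ)⁻¹ else 0), sum_ite_single]
  rw [← Finset.sum_mul (f := fun a : Fin g => if a = i' then (h : ℝ)⁻¹ else 0), sum_ite_single]
  rw [sum_ite_single, sum_ite_single, sum_ite_ite]
  rw [Finset.sum_const, Finset.card_univ, Fintype.card_fin, nsmul_eq_mul, mul_one,
    Finset.sum_const, Finset.card_univ, Fintype.card_fin, nsmul_eq_mul]
  by_cases hii : i = i' <;> by_cases hjj : j = j' <;> simp [hii, hjj] <;> field_simp <;> ring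

/-- Coefficient vector expressing `R_{ab}` as a linear combination of the basic
random effects `α`, `β`, `e`. -/
noncomputable def coefv (g h p q : ℕ) (x : Fin g → Fin p → ℝ) (w : Fin h → Fin q → ℝ)
    (a : Fin g) (b : Fin h) : (Fin g ⊕ (Fin h ⊕ Fin g × Fin h)) → ℝ :=
  Sum.elim (fun s => -((g : ℝ)⁻¹ * Hhat g p x a s))
    (Sum.elim (fun t => -((h : ℝ)⁻¹ * Hhatb h q w b t))
      (fun st => (if st.1 = a then (h : ℝ)⁻¹ else 0) + (if st.2 = b then (g : ℝ)⁻¹ else 0)))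

lemma rep_lemma {Ω : Type*} [MeasureSpace Ω] (g h p q : ℕ)
    (x : Fin g → Fin p → ℝ) (w : Fin h → Fin q → ℝ)
    (α : Fin g → Ω → ℝ) (β : Fin h → Ω → ℝ) (e : Fin g × Fin h → Ω → ℝ)
    (a : Fin g) (b : Fin h) (ω : Ω) :
    (h : ℝ)⁻¹ * ∑ j'' : Fin h, e (a, j'') ω + (g : ℝ)⁻¹ * ∑ i'' : Fin g, e (i'', b) ω
      - (g : ℝ)⁻¹ * ∑ s : Fin g, Hhat g p x a s * α s ω
      - (h : ℝ)⁻¹ * ∑ t : Fin h, Hhatb h q w b t * β t ω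
    = ∑ k, coefv g h p q x w a b k * Sum.elim α (Sum.elim β e) k ω := by
  rw [Fintype.sum_sum_type, Fintype.sum_sum_type, Fintype.sum_prod_type]
  simp only [coefv, Sum.elim_inl, Sum.elim_inr, add_mul, ite_mul, zero_mul,
    Finset.sum_add_distrib, Finset.sum_ite_eq', Finset.mem_univ, if_true,
    Finset.sum_ite_irrel, Finset.sum_const_zero, neg_mul, Finset.sum_neg_distrib,
    Finset.mul_sum]
  ring

/-- In the two-way crossed model without interaction, the cell-level linear EBLUP-error
terms `R_{ij} = ē_{i·} + ē_{·j} − g⁻¹ Σ_s Ĥ^{(a)}_{is} α_s − h⁻¹ Σ_t Ĥ^{(b)}_{jt} β_t`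
satisfy `Cov(R_{ij}, R_{i'j'}) = σe²(𝟙{i=i'}/h + 𝟙{j=j'}/g + 2/(gh))
+ (σα²/g) Ĥ^{(a)}_{ii'} + (σβ²/h) Ĥ^{(b)}_{jj'}`; in particular they are correlated even
when `i ≠ i'` and `j ≠ j'`. -/
theorem cell_eblup_error_covariance {Ω : Type*} [MeasureSpace Ω]
    [IsProbabilityMeasure (ℙ : Measure Ω)]
    (g h p q : ℕ) (hg : 1 ≤ g) (hh : 1 ≤ h) (hp : 1 ≤ p) (hq : 1 ≤ q)
    (x : Fin g → Fin p → ℝ) (hDa : IsUnit (Dhat g p x).det)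
    (w : Fin h → Fin q → ℝ) (hDb : IsUnit (Dhatb h q w).det)
    (σα2 σβ2 σe2 : ℝ) (hσα : 0 ≤ σα2) (hσβ : 0 ≤ σβ2) (hσe : 0 ≤ σe2)
    (α : Fin g → Ω → ℝ) (β : Fin h → Ω → ℝ) (e : Fin g × Fin h → Ω → ℝ)
    (hindep : iIndepFun (Sum.elim α (Sum.elim β e)) ℙ)
    (hαL2 : ∀ s, MemLp (α s) 2 ℙ) (hβL2 : ∀ t, MemLp (β t) 2 ℙ)
    (heL2 : ∀ ij, MemLp (e ij) 2 ℙ)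
    (hα0 : ∀ s, ∫ ω, α s ω = 0) (hβ0 : ∀ t, ∫ ω, β t ω = 0)
    (he0 : ∀ ij, ∫ ω, e ij ω = 0)
    (hαvar : ∀ s, Cov (α s) (α s) = σα2) (hβvar : ∀ t, Cov (β t) (β t) = σβ2)
    (hevar : ∀ ij, Cov (e ij) (e ij) = σe2) :
    ∀ (i i' : Fin g) (j j' : Fin h),
      Cov (fun ω => (h : ℝ)⁻¹ * ∑ j'' : Fin h, e (i, j'') ω
              + (g : ℝ)⁻¹ * ∑ i'' : Fin g, e (i'', j) ω
              - (g : ℝ)⁻¹ * ∑ s : Fin g, Hhat g p x i s * α s ω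
              - (h : ℝ)⁻¹ * ∑ t : Fin h, Hhatb h q w j t * β t ω)
          (fun ω => (h : ℝ)⁻¹ * ∑ j'' : Fin h, e (i', j'') ω
              + (g : ℝ)⁻¹ * ∑ i'' : Fin g, e (i'', j') ω
              - (g : ℝ)⁻¹ * ∑ s : Fin g, Hhat g p x i' s * α s ω
              - (h : ℝ)⁻¹ * ∑ t : Fin h, Hhatb h q w j' t * β t ω)
        = σe2 * ((if i = i' then (h : ℝ)⁻¹ else 0) + (if j = j' then (g : ℝ)⁻¹ else 0)
              + 2 / (g * h))
          + σα2 / g * Hhat g p x i i' + σβ2 / h * Hhatb h q w j j' := by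
  intro i i' j j'
  have hL2 : ∀ k, MemLp (Sum.elim α (Sum.elim β e) k) 2 ℙ := by
    rintro (s | t | st)
    · exact hαL2 s
    · exact hβL2 t
    · exact heL2 st
  have h0 : ∀ k, ∫ ω, Sum.elim α (Sum.elim β e) k ω = 0 := by
    rintro (s | t | st)
    · exact hα0 s
    · exact hβ0 t
    · exact he0 st
  have hVα : ∀ s, (∫ ω, α s ω * α s ω) = σα2 := fun s => by
    have hv := hαvar s
    unfold Cov at hv
    rwa [hα0 s, mul_zero, sub_zero] at hv
  have hVβ : ∀ t, (∫ ω, β t ω * β t ω) = σβ2 := fun t => by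
    have hv := hβvar t
    unfold Cov at hv
    rwa [hβ0 t, mul_zero, sub_zero] at hv
  have hVe : ∀ st, (∫ ω, e st ω * e st ω) = σe2 := fun st => by
    have hv := hevar st
    unfold Cov at hv
    rwa [he0 st, mul_zero, sub_zero] at hv
  have hzx : ∑ s : Fin g, xc g p x s = 0 := by
    unfold xc; exact sum_centered hg x
  have hzw : ∑ t : Fin h, wc h q w t = 0 := by
    unfold wc; exact sum_centered hh w
  have e1 : (fun ω => (h : ℝ)⁻¹ * ∑ j'' : Fin h, e (i, j'') ω
        + (g : ℝ)⁻¹ * ∑ i'' : Fin g, e (i'', j) ω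
        - (g : ℝ)⁻¹ * ∑ s : Fin g, Hhat g p x i s * α s ω
        - (h : ℝ)⁻¹ * ∑ t : Fin h, Hhatb h q w j t * β t ω)
      = fun ω => ∑ k, coefv g h p q x w i j k * Sum.elim α (Sum.elim β e) k ω :=
    funext fun ω => rep_lemma g h p q x w α β e i j ω
  have e2 : (fun ω => (h : ℝ)⁻¹ * ∑ j'' : Fin h, e (i', j'') ω
        + (g : ℝ)⁻¹ * ∑ i'' : Fin g, e (i'', j') ω
        - (g : ℝ)⁻¹ * ∑ s : Fin g, Hhat g p x i' s * α s ω
        - (h : ℝ)⁻¹ * ∑ t : Fin h, Hhatb h q w j' t * β t ω)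
      = fun ω => ∑ k, coefv g h p q x w i' j' k * Sum.elim α (Sum.elim β e) k ω :=
    funext fun ω => rep_lemma g h p q x w α β e i' j' ω
  rw [e1, e2, cov_linear_combo hindep hL2 h0 (coefv g h p q x w i j)
    (coefv g h p q x w i' j')]
  rw [Fintype.sum_sum_type, Fintype.sum_sum_type]
  simp only [coefv, Sum.elim_inl, Sum.elim_inr]
  simp_rw [hVα, hVβ, hVe]
  simp only [Hhat, Hhatb]
  rw [quad_piece hg (xc g p x) hzx (Dhat g p x) rfl hDa σα2 i i',
    quad_piece hh (wc h q w) hzw (Dhatb h q w) rfl hDb σβ2 j j',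
    e_piece g h hg hh σe2 i i' j j']
  ring
end

section
/- In the two-way crossed model with interaction, define for each row index i the linear EBLUP-error term T_i = γ̄_{i·} − g^{-1}Σ_{s=1}^g Ĥ^{(a)}_{is}·α_s. Then for all 1 ≤ i, i' ≤ g, Cov(T_i, T_{i'}) = 𝟙{i = i'}·σγ²/h + (σα²/g)·Ĥ^{(a)}_{ii'}. In particular Var(T_i) = σγ²/h + (σα²/g)·Ĥ^{(a)}_{ii}, which is the paper's mean-squared-error approximation MSE_LSW(α̂_i). -/
open Matrix MeasureTheory ProbabilityTheory BigOperators

/-!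
Each `T_i` is a linear combination of the mutually uncorrelated variables `α_s`, `γ_ij`, so
bilinearity of the covariance gives
`Cov(T_i, T_i') = 𝟙{i = i'} σγ²/h + (σα²/g²) Σ_s Ĥ_is Ĥ_i's`.
Writing `C` for the matrix with rows `x_{s(c)}`, one has `Ĥ = 𝟙𝟙ᵀ + C D̂⁻¹ Cᵀ` with `𝟙ᵀ C = 0`
(the rows are centered) and `Cᵀ C = g D̂`; hence `Ĥ² = g Ĥ`, and `Ĥ` is symmetric, so the sum
is `g Ĥ_ii'`.
-/

section HatMatrix

variable {m n : Type*} [Fintype m] [Fintype n] [DecidableEq n]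

/-- When `D = Cᵀ C / |m|` and the columns of `C` are centered, this is `|m|` times the orthogonal
projection onto the span of `𝟙` and the columns of `C`. -/
noncomputable def hatMatrix (C : Matrix m n ℝ) (D : Matrix n n ℝ) : Matrix m m ℝ :=
  of (fun _ _ => 1) + C * D⁻¹ * Cᵀ

omit [Fintype m] in
theorem isSymm_hatMatrix (C : Matrix m n ℝ) {D : Matrix n n ℝ} (hD : D.IsSymm) :
    (hatMatrix C D).IsSymm := by
  have hJ : (of fun _ _ => 1 : Matrix m m ℝ).IsSymm := by ext; rfl
  refine hJ.add ?_
  rw [IsSymm, transpose_mul, transpose_mul, transpose_transpose, transpose_nonsing_inv, hD.eq,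
    Matrix.mul_assoc]

theorem hatMatrix_mul_self {C : Matrix m n ℝ} {D : Matrix n n ℝ} (hD : IsUnit D.det)
    (hC : (1 : m → ℝ) ᵥ* C = 0) (hCD : Cᵀ * C = (Fintype.card m : ℝ) • D) :
    hatMatrix C D * hatMatrix C D = (Fintype.card m : ℝ) • hatMatrix C D := by
  set J : Matrix m m ℝ := of fun _ _ => 1
  set P := C * D⁻¹ * Cᵀ
  have hJJ : J * J = (Fintype.card m : ℝ) • J := by
    ext; simp [J, mul_apply]
  have hJC : J * C = 0 := by
    ext s k; simpa [J, mul_apply, vecMul, dotProduct] using congrFun hC k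
  have hJP : J * P = 0 := by simp only [P, ← Matrix.mul_assoc, hJC, Matrix.zero_mul]
  have hCJ : Cᵀ * J = 0 := by
    ext k s; simpa [J, mul_apply, vecMul, dotProduct] using congrFun hC k
  have hPJ : P * J = 0 := by simp only [P, Matrix.mul_assoc, hCJ, Matrix.mul_zero]
  have hPP : P * P = (Fintype.card m : ℝ) • P := by
    calc P * P = C * D⁻¹ * (Cᵀ * C) * D⁻¹ * Cᵀ := by simp only [P, Matrix.mul_assoc]
      _ = (Fintype.card m : ℝ) • P := by
        rw [hCD, Matrix.mul_smul, Matrix.mul_assoc C, nonsing_inv_mul _ hD, Matrix.mul_one,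
          Matrix.smul_mul, Matrix.smul_mul]
  calc hatMatrix C D * hatMatrix C D = J * J + J * P + (P * J + P * P) := by
        simp only [hatMatrix, add_mul, mul_add, J, P]; abel
    _ = _ := by rw [hJJ, hJP, hPJ, hPP, hatMatrix, smul_add]; abel

end HatMatrix

section Regression

variable {g p : ℕ} (x : Fin g → Fin p → ℝ)

theorem vecMul_one_xc (hg : g ≠ 0) : (1 : Fin g → ℝ) ᵥ* of (xc g p x) = 0 := by
  have hsum : ∑ s, xc g p x s = 0 := by
    simp only [xc, Finset.sum_sub_distrib, Finset.sum_const, Finset.card_univ, Fintype.card_fin,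
      ← Nat.cast_smul_eq_nsmul ℝ, smul_smul, mul_inv_cancel₀ (Nat.cast_ne_zero.2 hg : (g : ℝ) ≠ 0),
      one_smul, sub_self]
  ext k
  simpa [vecMul, dotProduct] using congrFun hsum k

theorem Dhat_eq_smul_transpose_mul :
    Dhat g p x = (g : ℝ)⁻¹ • ((of (xc g p x))ᵀ * of (xc g p x)) := by
  ext k l
  simp [Dhat, mul_apply, vecMulVec_apply, Matrix.sum_apply]

theorem of_Hhat : of (Hhat g p x) = hatMatrix (of (xc g p x)) (Dhat g p x) := by
  ext s u
  rw [of_apply, Hhat, dotProduct_mulVec]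
  rfl

theorem sum_Hhat_mul_Hhat (hD : IsUnit (Dhat g p x).det) (i i' : Fin g) :
    ∑ s, Hhat g p x i s * Hhat g p x i' s = g * Hhat g p x i i' := by
  have hg : g ≠ 0 := i.pos.ne'
  have hCD : (of (xc g p x))ᵀ * of (xc g p x) = (Fintype.card (Fin g) : ℝ) • Dhat g p x := by
    rw [Dhat_eq_smul_transpose_mul, smul_smul, Fintype.card_fin,
      mul_inv_cancel₀ (Nat.cast_ne_zero.2 hg), one_smul]
  have hsymm : (Dhat g p x).IsSymm := by
    rw [Dhat_eq_smul_transpose_mul]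
    exact IsSymm.smul (by simp [IsSymm, transpose_mul]) _
  have hH := hatMatrix_mul_self hD (vecMul_one_xc x hg) hCD
  have hs := isSymm_hatMatrix (of (xc g p x)) hsymm
  rw [← of_Hhat] at hH hs
  calc ∑ s, Hhat g p x i s * Hhat g p x i' s = ∑ s, Hhat g p x i s * Hhat g p x s i' := by
        simp only [← of_apply (f := Hhat g p x), hs.apply]
    _ = g * Hhat g p x i i' := by
        simpa [mul_apply] using congrFun (congrFun hH i) i'

end Regression

theorem Cov_eq_covariance {Ω : Type*} [MeasureSpace Ω] [IsProbabilityMeasure (ℙ : Measure Ω)]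
    {X Y : Ω → ℝ} (hX : MemLp X 2 ℙ) (hY : MemLp Y 2 ℙ) : Cov X Y = cov[X, Y] :=
  (covariance_eq_sub hX hY).symm

section Covariance

variable {Ω ι κ : Type*} [MeasurableSpace Ω] {μ : Measure Ω}

theorem covariance_fun_sum_mul_fun_sum_mul [IsFiniteMeasure μ] [Fintype ι] [Fintype κ]
    {X : ι → Ω → ℝ} {Y : κ → Ω → ℝ} (hX : ∀ i, MemLp (X i) 2 μ) (hY : ∀ k, MemLp (Y k) 2 μ)
    (a : ι → ℝ) (b : κ → ℝ) :
    cov[fun ω => ∑ i, a i * X i ω, fun ω => ∑ k, b k * Y k ω; μ]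
      = ∑ i, ∑ k, a i * b k * cov[X i, Y k; μ] := by
  rw [covariance_fun_sum_fun_sum (fun i => (hX i).const_mul (a i))
    (fun k => (hY k).const_mul (b k))]
  simp only [covariance_const_mul_left, covariance_const_mul_right, mul_left_comm, mul_assoc]

theorem covariance_eq_ite_of_iIndepFun [DecidableEq ι] {Z : ι → Ω → ℝ} (hZ : iIndepFun Z μ)
    (hZ2 : ∀ k, MemLp (Z k) 2 μ) (k l : ι) :
    cov[Z k, Z l; μ] = if k = l then cov[Z k, Z k; μ] else 0 := by
  split_ifs with hkl
  · rw [hkl]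
  · exact (hZ.indepFun hkl).covariance_eq_zero (hZ2 k) (hZ2 l)

end Covariance

section CrossedModel

variable {Ω : Type*} [MeasurableSpace Ω] {μ : Measure Ω} [IsFiniteMeasure μ] {g h : ℕ}
  {α : Fin g → Ω → ℝ} {γ : Fin g × Fin h → Ω → ℝ} {σα2 σγ2 : ℝ}

theorem covariance_row_error (hα : ∀ s, MemLp (α s) 2 μ) (hγ : ∀ ij, MemLp (γ ij) 2 μ)
    (hαα : ∀ s t, cov[α s, α t; μ] = if s = t then σα2 else 0)
    (hγγ : ∀ a b, cov[γ a, γ b; μ] = if a = b then σγ2 else 0)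
    (hγα : ∀ a s, cov[γ a, α s; μ] = 0) (H : Fin g → Fin g → ℝ) (i i' : Fin g) :
    cov[fun ω => (h : ℝ)⁻¹ * ∑ j : Fin h, γ (i, j) ω - (g : ℝ)⁻¹ * ∑ s : Fin g, H i s * α s ω,
        fun ω => (h : ℝ)⁻¹ * ∑ j : Fin h, γ (i', j) ω - (g : ℝ)⁻¹ * ∑ s : Fin g, H i' s * α s ω;
        μ]
      = (if i = i' then σγ2 / h else 0) + σα2 / g ^ 2 * ∑ s, H i s * H i' s := by
  conv_lhs => simp only [Finset.mul_sum, ← mul_assoc]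
  have hL2 {ι : Type} [Fintype ι] {X : ι → Ω → ℝ} (hX : ∀ k, MemLp (X k) 2 μ) (a : ι → ℝ) :
      MemLp (fun ω => ∑ k, a k * X k ω) 2 μ :=
    memLp_finsetSum _ fun k _ => (hX k).const_mul (a k)
  rw [covariance_fun_sub_fun_sub (hL2 (fun j => hγ (i, j)) _) (hL2 hα _)
    (hL2 (fun j => hγ (i', j)) _) (hL2 hα _)]
  simp only [covariance_fun_sum_mul_fun_sum_mul (fun j => hγ (_, j)) hα,
    covariance_fun_sum_mul_fun_sum_mul hα (fun j => hγ (_, j)),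
    covariance_fun_sum_mul_fun_sum_mul (fun j => hγ (_, j)) (fun j => hγ (_, j)),
    covariance_fun_sum_mul_fun_sum_mul hα hα, hαα, hγγ, hγα, covariance_comm (α _) (γ _)]
  simp only [mul_zero, Finset.sum_const_zero, sub_zero, Prod.mk.injEq, ite_and, mul_ite,
    Finset.sum_ite_eq, Finset.mem_univ, if_true, Finset.sum_ite_irrel, Finset.sum_const,
    Finset.card_univ, Fintype.card_fin, nsmul_eq_mul, Finset.mul_sum]
  congr 1
  · split_ifs
    · rcases eq_or_ne (h : ℝ) 0 with h0 | h0
      · simp [h0]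
      · field_simp
    · rfl
  · exact Finset.sum_congr rfl fun s _ => by ring

end CrossedModel

theorem row_eblup_error_covariance_interaction_general {Ω : Type*} [MeasureSpace Ω]
    [IsProbabilityMeasure (ℙ : Measure Ω)]
    (g h p : ℕ)
    (x : Fin g → Fin p → ℝ) (hD : IsUnit (Dhat g p x).det)
    (σα2 σγ2 : ℝ)
    (α : Fin g → Ω → ℝ) (γ : Fin g × Fin h → Ω → ℝ)
    (hindep : iIndepFun (Sum.elim α γ) ℙ)
    (hαL2 : ∀ s, MemLp (α s) 2 ℙ) (hγL2 : ∀ ij, MemLp (γ ij) 2 ℙ)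
    (hαvar : ∀ s, Cov (α s) (α s) = σα2) (hγvar : ∀ ij, Cov (γ ij) (γ ij) = σγ2) :
    (∀ i i' : Fin g,
      Cov (fun ω => (h : ℝ)⁻¹ * ∑ j : Fin h, γ (i, j) ω
              - (g : ℝ)⁻¹ * ∑ s : Fin g, Hhat g p x i s * α s ω)
          (fun ω => (h : ℝ)⁻¹ * ∑ j : Fin h, γ (i', j) ω
              - (g : ℝ)⁻¹ * ∑ s : Fin g, Hhat g p x i' s * α s ω)
        = (if i = i' then σγ2 / h else 0) + σα2 / g * Hhat g p x i i') ∧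
    (∀ i : Fin g,
      Cov (fun ω => (h : ℝ)⁻¹ * ∑ j : Fin h, γ (i, j) ω
              - (g : ℝ)⁻¹ * ∑ s : Fin g, Hhat g p x i s * α s ω)
          (fun ω => (h : ℝ)⁻¹ * ∑ j : Fin h, γ (i, j) ω
              - (g : ℝ)⁻¹ * ∑ s : Fin g, Hhat g p x i s * α s ω)
        = σγ2 / h + σα2 / g * Hhat g p x i i) := by
  have hcov := covariance_eq_ite_of_iIndepFun hindep (Sum.forall.2 ⟨hαL2, hγL2⟩)
  have hαα (s t : Fin g) : cov[α s, α t] = if s = t then σα2 else 0 := by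
    simpa [← Cov_eq_covariance (hαL2 s) (hαL2 s), hαvar] using hcov (.inl s) (.inl t)
  have hγγ (a b : Fin g × Fin h) : cov[γ a, γ b] = if a = b then σγ2 else 0 := by
    simpa [← Cov_eq_covariance (hγL2 a) (hγL2 a), hγvar] using hcov (.inr a) (.inr b)
  have hγα (a : Fin g × Fin h) (s : Fin g) : cov[γ a, α s] = 0 := by
    simpa using hcov (.inr a) (.inl s)
  have hT (i : Fin g) : MemLp (fun ω => (h : ℝ)⁻¹ * ∑ j : Fin h, γ (i, j) ω
      - (g : ℝ)⁻¹ * ∑ s : Fin g, Hhat g p x i s * α s ω) 2 ℙ :=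
    ((memLp_finsetSum _ fun j _ => hγL2 (i, j)).const_mul _).sub
      ((memLp_finsetSum _ fun s _ => (hαL2 s).const_mul _).const_mul _)
  have key (i i' : Fin g) := (Cov_eq_covariance (hT i) (hT i')).trans
    (covariance_row_error hαL2 hγL2 hαα hγγ hγα (Hhat g p x) i i')
  simp only [sum_Hhat_mul_Hhat x hD] at key
  have hg (i : Fin g) : (g : ℝ) ≠ 0 := Nat.cast_ne_zero.2 i.pos.ne'
  refine ⟨fun i i' => (key i i').trans ?_, fun i => (key i i).trans ?_⟩
  · field_simp [hg i]
  · rw [if_pos rfl]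
    field_simp [hg i]

/-- In the two-way crossed model with interaction, the row linear EBLUP-error terms
`T_i = γ̄_{i·} − g⁻¹ Σ_s Ĥ^{(a)}_{is} α_s` satisfy
`Cov(T_i, T_{i'}) = 𝟙{i=i'} σγ²/h + (σα²/g) Ĥ^{(a)}_{ii'}`; in particular
`Var(T_i) = σγ²/h + (σα²/g) Ĥ^{(a)}_{ii}`, the paper's MSE approximation for `α̂_i`. -/
theorem row_eblup_error_covariance_interaction {Ω : Type*} [MeasureSpace Ω]
    [IsProbabilityMeasure (ℙ : Measure Ω)]
    (g h p : ℕ) (hg : 1 ≤ g) (hh : 1 ≤ h) (hp : 1 ≤ p)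
    (x : Fin g → Fin p → ℝ) (hD : IsUnit (Dhat g p x).det)
    (σα2 σγ2 : ℝ) (hσα : 0 ≤ σα2) (hσγ : 0 ≤ σγ2)
    (α : Fin g → Ω → ℝ) (γ : Fin g × Fin h → Ω → ℝ)
    (hindep : iIndepFun (Sum.elim α γ) ℙ)
    (hαL2 : ∀ s, MemLp (α s) 2 ℙ) (hγL2 : ∀ ij, MemLp (γ ij) 2 ℙ)
    (hα0 : ∀ s, ∫ ω, α s ω = 0) (hγ0 : ∀ ij, ∫ ω, γ ij ω = 0)
    (hαvar : ∀ s, Cov (α s) (α s) = σα2) (hγvar : ∀ ij, Cov (γ ij) (γ ij) = σγ2) :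
    (∀ i i' : Fin g,
      Cov (fun ω => (h : ℝ)⁻¹ * ∑ j : Fin h, γ (i, j) ω
              - (g : ℝ)⁻¹ * ∑ s : Fin g, Hhat g p x i s * α s ω)
          (fun ω => (h : ℝ)⁻¹ * ∑ j : Fin h, γ (i', j) ω
              - (g : ℝ)⁻¹ * ∑ s : Fin g, Hhat g p x i' s * α s ω)
        = (if i = i' then σγ2 / h else 0) + σα2 / g * Hhat g p x i i') ∧
    (∀ i : Fin g,
      Cov (fun ω => (h : ℝ)⁻¹ * ∑ j : Fin h, γ (i, j) ω
              - (g : ℝ)⁻¹ * ∑ s : Fin g, Hhat g p x i s * α s ω)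
          (fun ω => (h : ℝ)⁻¹ * ∑ j : Fin h, γ (i, j) ω
              - (g : ℝ)⁻¹ * ∑ s : Fin g, Hhat g p x i s * α s ω)
        = σγ2 / h + σα2 / g * Hhat g p x i i) :=
  row_eblup_error_covariance_interaction_general g h p x hD σα2 σγ2 α γ hindep hαL2 hγL2 hαvar hγvar
end

section
/- In the two-way crossed model with interaction, define for each column index j the linear EBLUP-error term U_j = γ̄_{·j} − h^{-1}Σ_{t=1}^h Ĥ^{(b)}_{jt}·β_t. Then for all 1 ≤ j, j' ≤ h, Cov(U_j, U_{j'}) = 𝟙{j = j'}·σγ²/g + (σβ²/h)·Ĥ^{(b)}_{jj'}. In particular Var(U_j) = σγ²/g + (σβ²/h)·Ĥ^{(b)}_{jj}, which is the paper's mean-squared-error approximation MSE_LSW(β̂_j). -/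
/-!
Put `Z = Sum.elim β γ`. Each `U_j` is a fixed linear combination `∑ₐ c_j(a) Z_a` of independent
square-integrable variables, so `Cov(U_j, U_{j'}) = ∑ₐ c_j(a) c_{j'}(a) Var Z_a`. The
γ-coefficients are `g⁻¹ 𝟙{k = j}` and contribute `𝟙{j = j'} σγ²/g`. The β-coefficients
`-h⁻¹ Ĥ_{jt}` contribute `σβ² h⁻² ∑_t Ĥ_{jt} Ĥ_{j't}`, and `∑_t Ĥ_{jt} Ĥ_{j't} = h Ĥ_{jj'}`
because the centred covariates sum to zero and `∑_t w_{t(c)} w_{t(c)}ᵀ = h D̂_b`.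
-/

open Matrix MeasureTheory ProbabilityTheory BigOperators

namespace Matrix

variable {ι n K : Type*} [Fintype ι] [Fintype n]

theorem sum_dotProduct_mul_dotProduct [CommSemiring K] (u : ι → n → K) (x y : n → K) :
    ∑ t, (x ⬝ᵥ u t) * (y ⬝ᵥ u t) = x ⬝ᵥ (∑ t, vecMulVec (u t) (u t)) *ᵥ y := by
  simp only [sum_mulVec, dotProduct_sum, vecMulVec_mulVec, op_smul_eq_smul, dotProduct_smul,
    smul_eq_mul, dotProduct_comm y, mul_comm]

variable [DecidableEq n] [CommRing K]

theorem nonsing_inv_mul_mul_nonsing_inv (A : Matrix n n K) : A⁻¹ * A * A⁻¹ = A⁻¹ := by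
  by_cases hA : IsUnit A.det
  · rw [nonsing_inv_mul A hA, Matrix.one_mul]
  · simp [nonsing_inv_apply_not_isUnit A hA]

theorem sum_dotProduct_inv_mulVec_mul (u : ι → n → K) {D : Matrix n n K} (hD : D.IsSymm)
    {c : K} (hS : ∑ t, vecMulVec (u t) (u t) = c • D) (x y : n → K) :
    ∑ t, (x ⬝ᵥ D⁻¹ *ᵥ u t) * (y ⬝ᵥ D⁻¹ *ᵥ u t) = c * (x ⬝ᵥ D⁻¹ *ᵥ y) := by
  have hmove : ∀ z : n → K, z ᵥ* D⁻¹ = D⁻¹ *ᵥ z := fun z => by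
    rw [← vecMul_transpose, transpose_nonsing_inv, hD.eq]
  calc ∑ t, (x ⬝ᵥ D⁻¹ *ᵥ u t) * (y ⬝ᵥ D⁻¹ *ᵥ u t)
      = ∑ t, (D⁻¹ *ᵥ x ⬝ᵥ u t) * (D⁻¹ *ᵥ y ⬝ᵥ u t) := by simp only [dotProduct_mulVec, hmove]
    _ = D⁻¹ *ᵥ x ⬝ᵥ (c • D) *ᵥ D⁻¹ *ᵥ y := by rw [sum_dotProduct_mul_dotProduct, hS]
    _ = c * (x ⬝ᵥ D⁻¹ *ᵥ y) := by
      rw [smul_mulVec, dotProduct_smul, smul_eq_mul, ← hmove, ← dotProduct_mulVec, mulVec_mulVec,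
        mulVec_mulVec, nonsing_inv_mul_mul_nonsing_inv]

end Matrix

section Leverage

variable {h q : ℕ} (w : Fin h → Fin q → ℝ)

theorem sum_wc (hh : (h : ℝ) ≠ 0) : ∑ t, wc h q w t = 0 := by
  simp [wc, Finset.sum_sub_distrib, ← Nat.cast_smul_eq_nsmul ℝ, smul_smul, hh]

theorem sum_vecMulVec_wc (hh : (h : ℝ) ≠ 0) :
    ∑ t, vecMulVec (wc h q w t) (wc h q w t) = (h : ℝ) • Dhatb h q w := by
  rw [Dhatb, smul_smul, mul_inv_cancel₀ hh, one_smul]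

theorem dhatb_isSymm : (Dhatb h q w).IsSymm := by
  simp only [IsSymm, Dhatb, transpose_smul, transpose_sum, transpose_vecMulVec]

/-- `h⁻¹ Ĥ^{(b)}` is the hat matrix of the projection onto the constants and the centred
covariates, hence idempotent. -/
theorem sum_hhatb_mul_hhatb (j j' : Fin h) :
    ∑ t, Hhatb h q w j t * Hhatb h q w j' t = h * Hhatb h q w j j' := by
  have hh : (h : ℝ) ≠ 0 := Nat.cast_ne_zero.2 j.pos.ne'
  have hlin : ∀ x, ∑ t, x ⬝ᵥ (Dhatb h q w)⁻¹ *ᵥ wc h q w t = 0 := fun x => by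
    rw [← dotProduct_sum, ← mulVec_sum, sum_wc w hh, mulVec_zero, dotProduct_zero]
  have hquad := sum_dotProduct_inv_mulVec_mul (wc h q w) (dhatb_isSymm w) (sum_vecMulVec_wc w hh)
    (wc h q w j) (wc h q w j')
  simp only [Hhatb, add_mul, mul_add, one_mul, mul_one, Finset.sum_add_distrib, hlin, hquad,
    Finset.sum_const, Finset.card_univ, Fintype.card_fin, nsmul_eq_mul]
  ring

end Leverage

section Covariance

variable {Ω : Type*} [MeasureSpace Ω] [IsProbabilityMeasure (ℙ : Measure Ω)] {X Y : Ω → ℝ}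

theorem cov_eq_covariance (hX : MemLp X 2 ℙ) (hY : MemLp Y 2 ℙ) : Cov X Y = cov[X, Y] :=
  (covariance_eq_sub hX hY).symm

theorem cov_self_eq_variance (hX : MemLp X 2 ℙ) : Cov X X = Var[X] := by
  rw [cov_eq_covariance hX hX, covariance_self hX.aemeasurable]

end Covariance

namespace ProbabilityTheory

variable {Ω ι : Type*} {mΩ : MeasurableSpace Ω} {μ : Measure Ω} [IsFiniteMeasure μ] [Fintype ι]
  {Z : ι → Ω → ℝ}

theorem covariance_sum_mul_sum_mul_of_pairwise_indepFun (hZ : ∀ a, MemLp (Z a) 2 μ)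
    (hindep : Pairwise fun a b => Z a ⟂ᵢ[μ] Z b) (c d : ι → ℝ) :
    cov[fun ω => ∑ a, c a * Z a ω, fun ω => ∑ a, d a * Z a ω; μ]
      = ∑ a, c a * d a * Var[Z a; μ] := by
  classical
  have hcov : ∀ a b, cov[Z a, Z b; μ] = if a = b then Var[Z a; μ] else 0 := fun a b => by
    split_ifs with hab
    · rw [hab, covariance_self (hZ b).aemeasurable]
    · exact (hindep hab).covariance_eq_zero (hZ a) (hZ b)
  rw [covariance_fun_sum_fun_sum (fun a => (hZ a).const_mul (c a))
    (fun a => (hZ a).const_mul (d a))]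
  simp only [covariance_const_mul_left, covariance_const_mul_right, hcov, mul_ite, mul_zero,
    Finset.sum_ite_eq, Finset.mem_univ, if_true]
  exact Finset.sum_congr rfl fun a _ => by ring

end ProbabilityTheory

section ColumnError

variable {g h q : ℕ} (w : Fin h → Fin q → ℝ)

/-- The coefficients of `U_j` in the independent family `Sum.elim β γ`. -/
noncomputable def colErrorCoeff (g h q : ℕ) (w : Fin h → Fin q → ℝ) (j : Fin h) :
    Fin h ⊕ Fin g × Fin h → ℝ :=
  Sum.elim (fun t => -((h : ℝ)⁻¹ * Hhatb h q w j t)) (fun ij => if ij.2 = j then (g : ℝ)⁻¹ else 0)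

theorem colError_eq_sum {Ω : Type*} (β : Fin h → Ω → ℝ) (γ : Fin g × Fin h → Ω → ℝ) (j : Fin h)
    (ω : Ω) :
    (g : ℝ)⁻¹ * ∑ i, γ (i, j) ω - (h : ℝ)⁻¹ * ∑ t, Hhatb h q w j t * β t ω
      = ∑ a, colErrorCoeff g h q w j a * Sum.elim β γ a ω := by
  simp only [Fintype.sum_sum_type, Fintype.sum_prod_type, colErrorCoeff, Sum.elim_inl,
    Sum.elim_inr, ite_mul, zero_mul, Finset.sum_ite_eq', Finset.mem_univ, if_true, Finset.mul_sum,
    neg_mul, Finset.sum_neg_distrib, mul_assoc]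
  ring

theorem sum_colErrorCoeff_mul_colErrorCoeff (j j' : Fin h) (σβ2 σγ2 : ℝ) :
    ∑ a, colErrorCoeff g h q w j a * colErrorCoeff g h q w j' a
        * Sum.elim (fun _ => σβ2) (fun _ => σγ2) a
      = (if j = j' then σγ2 / g else 0) + σβ2 / h * Hhatb h q w j j' := by
  have hg : (g : ℝ) * ((g : ℝ)⁻¹ * (g : ℝ)⁻¹ * σγ2) = σγ2 / g := by
    rcases eq_or_ne (g : ℝ) 0 with hg | hg
    · simp [hg]
    · field_simp
  have hβ : ∑ t, (h : ℝ)⁻¹ * Hhatb h q w j t * ((h : ℝ)⁻¹ * Hhatb h q w j' t) * σβ2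
      = σβ2 / h * Hhatb h q w j j' := by
    have hh : (h : ℝ) ≠ 0 := Nat.cast_ne_zero.2 j.pos.ne'
    calc _ = (h : ℝ)⁻¹ * (h : ℝ)⁻¹ * σβ2 * ∑ t, Hhatb h q w j t * Hhatb h q w j' t := by
          rw [Finset.mul_sum]
          exact Finset.sum_congr rfl fun t _ => by ring
      _ = σβ2 / h * Hhatb h q w j j' := by
          rw [sum_hhatb_mul_hhatb]
          field_simp
  simp only [Fintype.sum_sum_type, Fintype.sum_prod_type, colErrorCoeff, Sum.elim_inl,
    Sum.elim_inr, neg_mul_neg, hβ, ite_mul, zero_mul, mul_ite, mul_zero, Finset.sum_ite_eq',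
    Finset.mem_univ, if_true]
  by_cases hjj : j = j'
  · subst hjj
    simp [hg, add_comm]
  · simp [hjj, Ne.symm hjj]

end ColumnError

theorem col_eblup_error_covariance_interaction_general {Ω : Type*} [MeasureSpace Ω]
    [IsProbabilityMeasure (ℙ : Measure Ω)]
    (g h q : ℕ)
    (w : Fin h → Fin q → ℝ)
    (σβ2 σγ2 : ℝ)
    (β : Fin h → Ω → ℝ) (γ : Fin g × Fin h → Ω → ℝ)
    (hindep : iIndepFun (Sum.elim β γ) ℙ)
    (hβL2 : ∀ t, MemLp (β t) 2 ℙ) (hγL2 : ∀ ij, MemLp (γ ij) 2 ℙ)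
    (hβvar : ∀ t, Cov (β t) (β t) = σβ2) (hγvar : ∀ ij, Cov (γ ij) (γ ij) = σγ2) :
    (∀ j j' : Fin h,
      Cov (fun ω => (g : ℝ)⁻¹ * ∑ i : Fin g, γ (i, j) ω
              - (h : ℝ)⁻¹ * ∑ t : Fin h, Hhatb h q w j t * β t ω)
          (fun ω => (g : ℝ)⁻¹ * ∑ i : Fin g, γ (i, j') ω
              - (h : ℝ)⁻¹ * ∑ t : Fin h, Hhatb h q w j' t * β t ω)
        = (if j = j' then σγ2 / g else 0) + σβ2 / h * Hhatb h q w j j') ∧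
    (∀ j : Fin h,
      Cov (fun ω => (g : ℝ)⁻¹ * ∑ i : Fin g, γ (i, j) ω
              - (h : ℝ)⁻¹ * ∑ t : Fin h, Hhatb h q w j t * β t ω)
          (fun ω => (g : ℝ)⁻¹ * ∑ i : Fin g, γ (i, j) ω
              - (h : ℝ)⁻¹ * ∑ t : Fin h, Hhatb h q w j t * β t ω)
        = σγ2 / g + σβ2 / h * Hhatb h q w j j) := by
  have hZ : ∀ a, MemLp (Sum.elim β γ a) 2 ℙ := Sum.forall.2 ⟨hβL2, hγL2⟩
  have hvar : ∀ a, Var[Sum.elim β γ a; ℙ] = Sum.elim (fun _ => σβ2) (fun _ => σγ2) a :=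
    Sum.forall.2 ⟨fun t => (cov_self_eq_variance (hβL2 t)).symm.trans (hβvar t),
      fun ij => (cov_self_eq_variance (hγL2 ij)).symm.trans (hγvar ij)⟩
  have hU : ∀ j, MemLp (fun ω => ∑ a, colErrorCoeff g h q w j a * Sum.elim β γ a ω) 2 ℙ :=
    fun j => memLp_finsetSum _ fun a _ => (hZ a).const_mul _
  have hcov : ∀ j j', Cov (fun ω => ∑ a, colErrorCoeff g h q w j a * Sum.elim β γ a ω)
      (fun ω => ∑ a, colErrorCoeff g h q w j' a * Sum.elim β γ a ω)
        = (if j = j' then σγ2 / g else 0) + σβ2 / h * Hhatb h q w j j' := fun j j' => by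
    rw [cov_eq_covariance (hU j) (hU j'), covariance_sum_mul_sum_mul_of_pairwise_indepFun hZ
      (fun a b hab => hindep.indepFun hab), ← sum_colErrorCoeff_mul_colErrorCoeff]
    simp only [hvar]
  simp only [colError_eq_sum]
  exact ⟨hcov, fun j => by simpa using hcov j j⟩

/-- In the two-way crossed model with interaction, the column linear EBLUP-error terms
`U_j = γ̄_{·j} − h⁻¹ Σ_t Ĥ^{(b)}_{jt} β_t` satisfy
`Cov(U_j, U_{j'}) = 𝟙{j=j'} σγ²/g + (σβ²/h) Ĥ^{(b)}_{jj'}`; in particular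
`Var(U_j) = σγ²/g + (σβ²/h) Ĥ^{(b)}_{jj}`, the paper's MSE approximation for `β̂_j`. -/
theorem col_eblup_error_covariance_interaction {Ω : Type*} [MeasureSpace Ω]
    [IsProbabilityMeasure (ℙ : Measure Ω)]
    (g h q : ℕ) (hg : 1 ≤ g) (hh : 1 ≤ h) (hq : 1 ≤ q)
    (w : Fin h → Fin q → ℝ) (hD : IsUnit (Dhatb h q w).det)
    (σβ2 σγ2 : ℝ) (hσβ : 0 ≤ σβ2) (hσγ : 0 ≤ σγ2)
    (β : Fin h → Ω → ℝ) (γ : Fin g × Fin h → Ω → ℝ)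
    (hindep : iIndepFun (Sum.elim β γ) ℙ)
    (hβL2 : ∀ t, MemLp (β t) 2 ℙ) (hγL2 : ∀ ij, MemLp (γ ij) 2 ℙ)
    (hβ0 : ∀ t, ∫ ω, β t ω = 0) (hγ0 : ∀ ij, ∫ ω, γ ij ω = 0)
    (hβvar : ∀ t, Cov (β t) (β t) = σβ2) (hγvar : ∀ ij, Cov (γ ij) (γ ij) = σγ2) :
    (∀ j j' : Fin h,
      Cov (fun ω => (g : ℝ)⁻¹ * ∑ i : Fin g, γ (i, j) ω
              - (h : ℝ)⁻¹ * ∑ t : Fin h, Hhatb h q w j t * β t ω)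
          (fun ω => (g : ℝ)⁻¹ * ∑ i : Fin g, γ (i, j') ω
              - (h : ℝ)⁻¹ * ∑ t : Fin h, Hhatb h q w j' t * β t ω)
        = (if j = j' then σγ2 / g else 0) + σβ2 / h * Hhatb h q w j j') ∧
    (∀ j : Fin h,
      Cov (fun ω => (g : ℝ)⁻¹ * ∑ i : Fin g, γ (i, j) ω
              - (h : ℝ)⁻¹ * ∑ t : Fin h, Hhatb h q w j t * β t ω)
          (fun ω => (g : ℝ)⁻¹ * ∑ i : Fin g, γ (i, j) ω
              - (h : ℝ)⁻¹ * ∑ t : Fin h, Hhatb h q w j t * β t ω)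
        = σγ2 / g + σβ2 / h * Hhatb h q w j j) :=
  col_eblup_error_covariance_interaction_general g h q w σβ2 σγ2 β γ hindep hβL2 hγL2 hβvar hγvar
end
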